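/- arXiv:2502.16962 — 4 statements merged into one kernel-verified Lean document; each statement's English description precedes it below -/
import Mathlib

section
/- If G is a ring of diamonds, then G admits a (1,1,1)-packing edge-coloring, i.e., a proper 3-edge-coloring. -/
open SimpleGraph

/-- For a sequence of levels `s : Fin k → ℕ`, an `S`-packing edge-coloring assigns to each
edge a color in `Fin k` so that any two distinct edges of the same color `i` are at
distance at least `s i + 1` in the line graph, i.e., every walk between them in the line
graph has length greater than `s i`. -/
def SimpleGraph.IsPackingEdgeColoring {V : Type*} (G : SimpleGraph V) {k : ℕ}
    (s : Fin k → ℕ) (c : G.edgeSet → Fin k) : Prop :=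
  ∀ e f : G.edgeSet, e ≠ f → c e = c f →
    ∀ p : G.lineGraph.Walk e f, s (c e) < p.length

/-- A graph is cubic if every vertex has degree 3. -/
def SimpleGraph.IsCubic {V : Type*} (G : SimpleGraph V) : Prop :=
  ∀ v : V, (G.neighborSet v).ncard = 3

/-- A graph is claw-free if it has no induced `K_{1,3}`. -/
def SimpleGraph.ClawFree {V : Type*} (G : SimpleGraph V) : Prop :=
  ¬ ∃ v a b c : V, G.Adj v a ∧ G.Adj v b ∧ G.Adj v c ∧
      a ≠ b ∧ a ≠ c ∧ b ≠ c ∧ ¬ G.Adj a b ∧ ¬ G.Adj a c ∧ ¬ G.Adj b c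

/-- A graph is 2-edge-connected if it is connected, has at least two vertices,
and has no bridge. -/
def SimpleGraph.TwoEdgeConnected {V : Type*} (G : SimpleGraph V) : Prop :=
  G.Connected ∧ Nontrivial V ∧ ∀ e : Sym2 V, ¬ G.IsBridge e

/-- The four vertices `x, y, z, w` induce a diamond (`K₄` minus the edge `xy`) in `G`,
with `z, w` the internal vertices. -/
def SimpleGraph.InducedDiamond {V : Type*} (G : SimpleGraph V) (x y z w : V) : Prop :=
  x ≠ y ∧ x ≠ z ∧ x ≠ w ∧ y ≠ z ∧ y ≠ w ∧ z ≠ w ∧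
    G.Adj x z ∧ G.Adj x w ∧ G.Adj y z ∧ G.Adj y w ∧ G.Adj z w ∧ ¬ G.Adj x y

/-- A ring of diamonds is a connected claw-free cubic graph in which every vertex
belongs to an induced diamond. -/
def SimpleGraph.IsRingOfDiamonds {V : Type*} (G : SimpleGraph V) : Prop :=
  G.Connected ∧ G.ClawFree ∧ G.IsCubic ∧
    ∀ v : V, ∃ x y z w : V, (v = x ∨ v = y ∨ v = z ∨ v = w) ∧ G.InducedDiamond x y z w

/-!
A ring of diamonds is 3-edge-coloured by a local rule. In a cubic graph every vertex of an induced
diamond `x y z w` has all its neighbours determined: the middle vertices `z, w` see only the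
diamond, and each tip has one further neighbour outside it. Give the middle edge `zw` and every
edge leaving a diamond colour `2`, and colour the four side edges alternately `0, 1` around the
4-cycle `x z y w`, the phase being fixed by an arbitrary linear order on the vertices. An edge
`s(x, z)` between a tip and a middle vertex has exactly one common neighbour, a middle edge has
two and an edge leaving a diamond has none, so each edge knows which kind it is, and a side edge
determines its diamond; hence the rule is well defined, and at every vertex the three incident
edges receive three different colours.
-/

lemma Set.injOn_triple {α β : Type*} {f : α → β} {a b c : α} (hab : f a ≠ f b)
    (hac : f a ≠ f c) (hbc : f b ≠ f c) : Set.InjOn f {a, b, c} := by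
  rintro u (rfl | rfl | rfl) v (rfl | rfl | rfl) huv <;> first | rfl | simp_all

namespace SimpleGraph

variable {V : Type*} {G : SimpleGraph V}

theorem isPackingEdgeColoring_of_lineGraph_coloring {k : ℕ} {s : Fin k → ℕ}
    (hs : ∀ i, s i ≤ 1) (C : G.lineGraph.Coloring (Fin k)) : G.IsPackingEdgeColoring s C := by
  intro e f hne hcol p
  rcases p with _ | ⟨hadj, _ | ⟨_, _⟩⟩
  · exact absurd rfl hne
  · exact absurd hcol (C.valid hadj)
  · have := hs (C e)
    simp only [Walk.length_cons]
    omega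

def lineGraphColoringOfInjOn {α : Type*} (c : Sym2 V → α)
    (hc : ∀ v, Set.InjOn (fun u => c s(v, u)) (G.neighborSet v)) : G.lineGraph.Coloring α :=
  Coloring.mk (fun e => c e) fun {e f} hef => by
    obtain ⟨hne, v, hve, hvf⟩ := lineGraph_adj_iff_exists.mp hef
    obtain ⟨a, ha⟩ := Sym2.mem_iff_exists.mp hve
    obtain ⟨b, hb⟩ := Sym2.mem_iff_exists.mp hvf
    have hab : a ≠ b := by
      rintro rfl
      exact hne (Subtype.ext (ha.trans hb.symm))
    have hva : G.Adj v a := G.mem_edgeSet.mp (ha ▸ e.2)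
    have hvb : G.Adj v b := G.mem_edgeSet.mp (hb ▸ f.2)
    show c e ≠ c f
    rw [ha, hb]
    exact fun h => hab (hc v hva hvb h)

theorem neighborSet_eq_of_ncard_eq_three {v a b c : V} (hv : (G.neighborSet v).ncard = 3)
    (ha : G.Adj v a) (hb : G.Adj v b) (hc : G.Adj v c) (hab : a ≠ b) (hac : a ≠ c)
    (hbc : b ≠ c) : G.neighborSet v = {a, b, c} := by
  refine (Set.eq_of_subset_of_ncard_le ?_ ?_ (Set.finite_of_ncard_ne_zero (by omega))).symm
  · rintro t (rfl | rfl | rfl) <;> assumption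
  · rw [hv, Set.ncard_eq_three.mpr ⟨a, b, c, hab, hac, hbc, rfl⟩]

theorem exists_adj_ne_ne_of_ncard_eq_three {v a b : V} (hv : (G.neighborSet v).ncard = 3) :
    ∃ c, G.Adj v c ∧ c ≠ a ∧ c ≠ b := by
  have hlt : ({a, b} : Set V).ncard < (G.neighborSet v).ncard :=
    hv ▸ (Set.ncard_insert_le a {b}).trans_lt (by simp)
  obtain ⟨c, hc, hcab⟩ := Set.exists_mem_notMem_of_ncard_lt_ncard hlt
  simp only [Set.mem_insert_iff, Set.mem_singleton_iff, not_or] at hcab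
  exact ⟨c, hc, hcab⟩

namespace InducedDiamond

variable {x y z w : V}

theorem swap_tips (hd : G.InducedDiamond x y z w) : G.InducedDiamond y x z w := by
  obtain ⟨h1, h2, h3, h4, h5, h6, a1, a2, a3, a4, a5, n1⟩ := hd
  exact ⟨h1.symm, h4, h5, h2, h3, h6, a3, a4, a1, a2, a5, fun h => n1 h.symm⟩

theorem swap_middles (hd : G.InducedDiamond x y z w) : G.InducedDiamond x y w z := by
  obtain ⟨h1, h2, h3, h4, h5, h6, a1, a2, a3, a4, a5, n1⟩ := hd
  exact ⟨h1, h3, h2, h5, h4, h6.symm, a2, a1, a4, a3, a5.symm, n1⟩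

variable (hG : G.IsCubic) (hd : G.InducedDiamond x y z w)
include hG hd

theorem neighborSet_middle : G.neighborSet z = {x, y, w} := by
  obtain ⟨h1, -, h3, -, h5, -, a1, -, a3, -, a5, -⟩ := hd
  exact neighborSet_eq_of_ncard_eq_three (hG z) a1.symm a3.symm a5 h1 h3 h5

theorem commonNeighbors_tip_middle : G.commonNeighbors x z = {w} := by
  ext t
  rw [mem_commonNeighbors, ← mem_neighborSet _ z, neighborSet_middle hG hd]
  obtain ⟨-, -, -, -, -, -, -, a2, -, a4, a5, n1⟩ := hd
  constructor
  · rintro ⟨hxt, rfl | rfl | rfl⟩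
    · exact absurd hxt (G.irrefl)
    · exact absurd hxt n1
    · rfl
  · rintro rfl
    exact ⟨a2, Or.inr (Or.inr rfl)⟩

theorem commonNeighbors_middles : G.commonNeighbors z w = {x, y} := by
  ext t
  rw [mem_commonNeighbors, ← mem_neighborSet _ z, neighborSet_middle hG hd]
  obtain ⟨-, -, -, -, -, -, -, a2, -, a4, a5, -⟩ := hd
  constructor
  · rintro ⟨rfl | rfl | rfl, hwt⟩
    · exact Or.inl rfl
    · exact Or.inr rfl
    · exact absurd hwt (G.irrefl)
  · rintro (rfl | rfl)
    · exact ⟨Or.inl rfl, a2.symm⟩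
    · exact ⟨Or.inr (Or.inl rfl), a4.symm⟩

theorem neighborSet_tip {v : V} (hv : G.Adj x v) (hvz : v ≠ z) (hvw : v ≠ w) :
    G.neighborSet x = {z, w, v} := by
  obtain ⟨-, -, -, -, -, hzw, hxz, hxw, -⟩ := hd
  exact neighborSet_eq_of_ncard_eq_three (hG x) hxz hxw hv hzw hvz.symm hvw.symm

theorem commonNeighbors_tip_outside {v : V} (hv : G.Adj x v) (hvz : v ≠ z) (hvw : v ≠ w) :
    G.commonNeighbors x v = ∅ := by
  refine Set.eq_empty_of_forall_notMem fun t ⟨hxt, hvt⟩ => ?_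
  have hxvt : v ∈ G.commonNeighbors x t := ⟨hv, hvt.symm⟩
  rw [hd.neighborSet_tip hG hv hvz hvw] at hxt
  rcases hxt with rfl | rfl | rfl
  · rw [hd.commonNeighbors_tip_middle hG] at hxvt
    exact hvw hxvt
  · rw [hd.swap_middles.commonNeighbors_tip_middle hG] at hxvt
    exact hvz hxvt
  · exact G.irrefl hvt

theorem eq_of_sideEdge_eq {x' y' z' w' : V} (hd' : G.InducedDiamond x' y' z' w')
    (he : s(x, z) = s(x', z')) : x = x' ∧ y = y' ∧ z = z' ∧ w = w' := by
  have hw := hd.commonNeighbors_tip_middle hG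
  rcases Sym2.eq_iff.mp he with ⟨rfl, rfl⟩ | ⟨rfl, rfl⟩
  · rw [hd'.commonNeighbors_tip_middle hG, Set.singleton_eq_singleton_iff] at hw
    subst w'
    have hxy := (hd.commonNeighbors_middles hG).symm.trans (hd'.commonNeighbors_middles hG)
    refine ⟨rfl, ?_, rfl, rfl⟩
    have hy : y ∈ ({x, y'} : Set V) := hxy ▸ Or.inr rfl
    exact hy.resolve_left hd.1.symm
  · rw [commonNeighbors_symm, hd'.commonNeighbors_tip_middle hG,
      Set.singleton_eq_singleton_iff] at hw
    subst w'
    have hy' : y' ∈ G.commonNeighbors x w := by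
      rw [hd'.commonNeighbors_middles hG]
      exact Or.inr rfl
    rw [hd.swap_middles.commonNeighbors_tip_middle hG] at hy'
    exact absurd hy' hd'.1.symm

end InducedDiamond

section Coloring

variable [LinearOrder V]

/-- The colour of the side edge `s(x, z)` of the diamond `x y z w`. -/
def diamondSideColor (x y z w : V) : Fin 3 := if (x < y ↔ z < w) then 0 else 1

theorem diamondSideColor_ne_two (x y z w : V) : diamondSideColor x y z w ≠ 2 := by
  unfold diamondSideColor
  split <;> decide

theorem diamondSideColor_swap_right (x y : V) {z w : V} (h : z ≠ w) :
    diamondSideColor x y z w ≠ diamondSideColor x y w z := by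
  unfold diamondSideColor
  split_ifs <;> first | decide | grind

theorem diamondSideColor_swap_left {x y : V} (z w : V) (h : x ≠ y) :
    diamondSideColor x y z w ≠ diamondSideColor y x z w := by
  unfold diamondSideColor
  split_ifs <;> first | decide | grind

variable (G) in
open Classical in
noncomputable def diamondEdgeColoring (e : Sym2 V) : Fin 3 :=
  if ∃ x y z w, G.InducedDiamond x y z w ∧ e = s(x, z) ∧ diamondSideColor x y z w = 0 then 0
  else if ∃ x y z w, G.InducedDiamond x y z w ∧ e = s(x, z) then 1
  else 2

variable (hG : G.IsCubic)
include hG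

theorem InducedDiamond.diamondEdgeColoring_side {x y z w : V} (hd : G.InducedDiamond x y z w) :
    G.diamondEdgeColoring s(x, z) = diamondSideColor x y z w := by
  unfold diamondEdgeColoring
  by_cases h0 : diamondSideColor x y z w = 0
  · rw [if_pos ⟨x, y, z, w, hd, rfl, h0⟩, h0]
  · rw [if_neg, if_pos ⟨x, y, z, w, hd, rfl⟩]
    · have := diamondSideColor_ne_two x y z w
      omega
    · rintro ⟨x', y', z', w', hd', he, h0'⟩
      obtain ⟨rfl, rfl, rfl, rfl⟩ := hd.eq_of_sideEdge_eq hG hd' he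
      exact h0 h0'

theorem diamondEdgeColoring_eq_two {u v : V} (h : ∀ t, G.commonNeighbors u v ≠ {t}) :
    G.diamondEdgeColoring s(u, v) = 2 := by
  have hside : ¬ ∃ x y z w, G.InducedDiamond x y z w ∧ s(u, v) = s(x, z) := by
    rintro ⟨x, y, z, w, hd, he⟩
    rcases Sym2.eq_iff.mp he with ⟨rfl, rfl⟩ | ⟨rfl, rfl⟩
    · exact h w (hd.commonNeighbors_tip_middle hG)
    · exact h w (by rw [commonNeighbors_symm]; exact hd.commonNeighbors_tip_middle hG)
  rw [diamondEdgeColoring, if_neg, if_neg hside]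
  exact fun ⟨x, y, z, w, hd, he, _⟩ => hside ⟨x, y, z, w, hd, he⟩

theorem InducedDiamond.injOn_diamondEdgeColoring_tip {x y z w : V}
    (hd : G.InducedDiamond x y z w) :
    Set.InjOn (fun u => G.diamondEdgeColoring s(x, u)) (G.neighborSet x) := by
  obtain ⟨v, hxv, hvz, hvw⟩ :=
    exists_adj_ne_ne_of_ncard_eq_three (a := z) (b := w) (hG x)
  have hv : G.diamondEdgeColoring s(x, v) = 2 := by
    refine diamondEdgeColoring_eq_two hG fun t => ?_
    rw [hd.commonNeighbors_tip_outside hG hxv hvz hvw]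
    exact (Set.singleton_ne_empty t).symm
  rw [hd.neighborSet_tip hG hxv hvz hvw]
  apply Set.injOn_triple <;>
    simp only [hd.diamondEdgeColoring_side hG, hd.swap_middles.diamondEdgeColoring_side hG, hv]
  · exact diamondSideColor_swap_right x y (hd.2.2.2.2.2.1 : z ≠ w)
  · exact diamondSideColor_ne_two x y z w
  · exact diamondSideColor_ne_two x y w z

theorem InducedDiamond.injOn_diamondEdgeColoring_middle {x y z w : V}
    (hd : G.InducedDiamond x y z w) :
    Set.InjOn (fun u => G.diamondEdgeColoring s(z, u)) (G.neighborSet z) := by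
  have hzw : G.diamondEdgeColoring s(z, w) = 2 := by
    refine diamondEdgeColoring_eq_two hG fun t h => hd.1 ?_
    rw [hd.commonNeighbors_middles hG] at h
    have hx : x ∈ ({t} : Set V) := h ▸ Or.inl rfl
    have hy : y ∈ ({t} : Set V) := h ▸ Or.inr rfl
    exact hx.trans hy.symm
  rw [hd.neighborSet_middle hG]
  apply Set.injOn_triple <;>
    simp only [Sym2.eq_swap (a := z) (b := x), Sym2.eq_swap (a := z) (b := y),
      hd.diamondEdgeColoring_side hG, hd.swap_tips.diamondEdgeColoring_side hG, hzw]
  · exact diamondSideColor_swap_left z w (hd.1 : x ≠ y)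
  · exact diamondSideColor_ne_two x y z w
  · exact diamondSideColor_ne_two y x z w

theorem injOn_diamondEdgeColoring
    (hdiamond : ∀ v, ∃ x y z w,
      (v = x ∨ v = y ∨ v = z ∨ v = w) ∧ G.InducedDiamond x y z w)
    (v : V) : Set.InjOn (fun u => G.diamondEdgeColoring s(v, u)) (G.neighborSet v) := by
  obtain ⟨x, y, z, w, hv | hv | hv | hv, hd⟩ := hdiamond v <;> subst v
  · exact hd.injOn_diamondEdgeColoring_tip hG
  · exact hd.swap_tips.injOn_diamondEdgeColoring_tip hG
  · exact hd.injOn_diamondEdgeColoring_middle hG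
  · exact hd.swap_middles.injOn_diamondEdgeColoring_middle hG

end Coloring

end SimpleGraph

theorem ringOfDiamonds_packing_edge_colorable_general {V : Type*}
    (G : SimpleGraph V) (hring : G.IsRingOfDiamonds) :
    ∃ c : G.edgeSet → Fin 3, G.IsPackingEdgeColoring ![1, 1, 1] c := by
  obtain ⟨-, -, hG, hdiamond⟩ := hring
  let _ : LinearOrder V := WellOrderingRel.isWellOrder.linearOrder
  exact ⟨_, isPackingEdgeColoring_of_lineGraph_coloring (by decide)
    (G.lineGraphColoringOfInjOn _ (injOn_diamondEdgeColoring hG hdiamond))⟩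

/-- Every ring of diamonds admits a (1,1,1)-packing edge-coloring,
that is, a proper 3-edge-coloring. -/
theorem ringOfDiamonds_packing_edge_colorable {V : Type*} [Fintype V]
    (G : SimpleGraph V) (hring : G.IsRingOfDiamonds) :
    ∃ c : G.edgeSet → Fin 3, G.IsPackingEdgeColoring ![1, 1, 1] c :=
  ringOfDiamonds_packing_edge_colorable_general G hring
end

section
/- Let G be a 2-edge-connected cubic graph whose vertex set can be partitioned into vertex-disjoint triangles (that is, there is a partition of V(G) into 3-element sets each of which induces a triangle in G). Then G admits a (1,1,1,3)-packing edge-coloring. -/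
open SimpleGraph

/-!
Contracting every triangle of the factor to a vertex turns `G` into a loopless multigraph of
maximum degree three, whose edges are the edges of `G` between triangles. By Shannon's theorem,
proved with the usual fan and Kempe-chain recolorings, it has a proper edge coloring `κ` with
four colors. Keep `κ` on the edges between triangles, and give each triangle edge the color
of the contracted edge at the opposite vertex, or, when that color is `3`, a color of `0, 1, 2`
free at both ends. Color `3` then lives only on edges between triangles, at most one at each
triangle, and two such edges are at distance at least four.
-/

namespace SimpleGraph

variable {V : Type*} {G : SimpleGraph V}

lemma Walk.IsPath.exists_adj_adj_of_mem_support {y z : V} {p : G.Walk y z} (hp : p.IsPath)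
    {w : V} (hw : w ∈ p.support) (hwy : w ≠ y) (hwz : w ≠ z) :
    ∃ n₁ ∈ p.support, ∃ n₂ ∈ p.support, n₁ ≠ n₂ ∧ G.Adj w n₁ ∧ G.Adj w n₂ := by
  induction p with
  | nil => exact absurd (by simpa using hw) hwy
  | @cons y b z h q ih =>
    rw [Walk.support_cons, List.mem_cons] at hw
    obtain rfl | hw := hw
    · exact absurd rfl hwy
    obtain ⟨hq, hyq⟩ := (Walk.cons_isPath_iff _ _).mp hp
    by_cases hwb : w = b
    · subst hwb
      cases q with
      | nil => exact absurd rfl hwz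
      | @cons _ b₂ _ h₂ q₂ =>
        refine ⟨y, by simp, b₂, by simp, ?_, h.symm, h₂⟩
        rintro rfl
        exact hyq (by simp)
    · obtain ⟨n₁, hn₁, n₂, hn₂, hne, h₁, h₂⟩ := ih hq hw hwb hwz
      exact ⟨n₁, by simp [hn₁], n₂, by simp [hn₂], hne, h₁, h₂⟩

lemma Walk.exists_adj_start_mem_support {y z : V} (p : G.Walk y z) (hyz : y ≠ z) :
    ∃ n ∈ p.support, G.Adj y n := by
  cases p with
  | nil => exact absurd rfl hyz
  | cons h q => exact ⟨_, by simp, h⟩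

lemma Reachable.mem_of_forall_adj {S : Set V} (hS : ∀ a b, G.Adj a b → b ∈ S → a ∈ S)
    {x w : V} (h : G.Reachable x w) (hw : w ∈ S) : x ∈ S := by
  obtain ⟨p⟩ := h
  induction p with
  | nil => exact hw
  | cons h _ ih => exact hS _ _ h (ih hw)

/-- In a graph of maximum degree two, a connected component contains at most two vertices of
degree at most one: they are the ends of a path, and that path is the whole component. -/
lemma not_reachable_of_subsingleton_neighborSet
    (hdeg : ∀ t y₁ y₂ y₃, G.Adj t y₁ → G.Adj t y₂ → G.Adj t y₃ → y₁ = y₂ ∨ y₁ = y₃ ∨ y₂ = y₃)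
    {x y z : V} (hxy : x ≠ y) (hxz : x ≠ z) (hyz : y ≠ z) (hx : (G.neighborSet x).Subsingleton)
    (hy : (G.neighborSet y).Subsingleton) (hz : (G.neighborSet z).Subsingleton)
    (hrxy : G.Reachable x y) : ¬ G.Reachable x z := by
  classical
  intro hrxz
  obtain ⟨p, hp⟩ := ((hrxy.symm.trans hrxz).some).toPath
  have hS : ∀ a b, G.Adj a b → b ∈ p.support → a ∈ p.support := by
    intro a b hab hb
    by_cases hby : b = y
    · subst hby
      obtain ⟨n, hn, hbn⟩ := p.exists_adj_start_mem_support hyz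
      rwa [hy hab.symm hbn]
    by_cases hbz : b = z
    · subst hbz
      obtain ⟨n, hn, hbn⟩ := p.reverse.exists_adj_start_mem_support hyz.symm
      rw [Walk.support_reverse, List.mem_reverse] at hn
      rwa [hz hab.symm hbn]
    obtain ⟨n₁, hn₁, n₂, hn₂, hne, h₁, h₂⟩ := hp.exists_adj_adj_of_mem_support hb hby hbz
    rcases hdeg b a n₁ n₂ hab.symm h₁ h₂ with rfl | rfl | h
    exacts [hn₁, hn₂, absurd h hne]
  obtain ⟨n₁, -, n₂, -, hne, h₁, h₂⟩ := hp.exists_adj_adj_of_mem_support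
    (hrxy.mem_of_forall_adj hS p.start_mem_support) hxy hxz
  exact hne (hx h₁ h₂)

lemma exists_adj_eq_of_mem (e : G.edgeSet) {v : V} (hv : v ∈ (e : Sym2 V)) :
    ∃ w, G.Adj v w ∧ (e : Sym2 V) = s(v, w) :=
  ⟨Sym2.Mem.other hv, by rw [← mem_edgeSet, Sym2.other_spec hv]; exact e.2,
    (Sym2.other_spec hv).symm⟩

lemma lineGraph_three_lt_length {A : Set V} {e f : G.edgeSet} (hne : e ≠ f)
    (heA : ∃ x ∈ (e : Sym2 V), x ∈ A)
    (he : ∀ g, G.lineGraph.Adj e g → ∀ x ∈ (g : Sym2 V), x ∈ A)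
    (hf : ∀ g : G.edgeSet, (∃ x ∈ (g : Sym2 V), x ∈ A) → ¬ G.lineGraph.Adj g f)
    (p : G.lineGraph.Walk e f) : 3 < p.length := by
  have inside : ∀ {g}, G.lineGraph.Adj e g → ∃ x ∈ (g : Sym2 V), x ∈ A := fun h =>
    ⟨_, Sym2.out_fst_mem _, he _ h _ (Sym2.out_fst_mem _)⟩
  have touches : ∀ {g₁ g₂}, G.lineGraph.Adj e g₁ → G.lineGraph.Adj g₁ g₂ →
      ∃ x ∈ (g₂ : Sym2 V), x ∈ A := fun h₁ h₂ => by
    obtain ⟨-, x, hx₁, hx₂⟩ := lineGraph_adj_iff_exists.mp h₂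
    exact ⟨x, hx₂, he _ h₁ x hx₁⟩
  match p with
  | .nil => exact absurd rfl hne
  | .cons h₁ .nil => exact absurd h₁ (hf e heA)
  | .cons h₁ (.cons h₂ .nil) => exact absurd h₂ (hf _ (inside h₁))
  | .cons h₁ (.cons h₂ (.cons h₃ .nil)) => exact absurd h₃ (hf _ (touches h₁ h₂))
  | .cons _ (.cons _ (.cons _ (.cons _ _))) => simp

lemma IsCubic.exists_third_neighbor (hG : G.IsCubic) {v x y : V} (hx : G.Adj v x)
    (hy : G.Adj v y) (hxy : x ≠ y) :
    ∃ z, z ≠ x ∧ z ≠ y ∧ ∀ w, G.Adj v w ↔ w = x ∨ w = y ∨ w = z := by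
  have hsub : {x, y} ⊆ G.neighborSet v := by
    rintro w (rfl | rfl)
    exacts [hx, hy]
  have hcard := Set.ncard_sdiff_add_ncard_of_subset hsub
    (Set.finite_of_ncard_ne_zero (by rw [hG v]; norm_num))
  rw [Set.ncard_pair hxy, hG v] at hcard
  obtain ⟨z, hz⟩ := Set.ncard_eq_one.mp (by omega : (G.neighborSet v \ {x, y}).ncard = 1)
  have hmem : ∀ w, w ∈ G.neighborSet v \ {x, y} ↔ w = z := fun w => by rw [hz]; rfl
  obtain ⟨hzv, hzxy⟩ := (hmem z).mpr rfl
  refine ⟨z, fun h => hzxy (Or.inl h), fun h => hzxy (Or.inr h), fun w => ⟨fun hw => ?_, ?_⟩⟩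
  · by_contra h
    push Not at h
    exact h.2.2 ((hmem w).mp ⟨hw, fun h' => h'.elim h.1 h.2.1⟩)
  · rintro (rfl | rfl | rfl)
    exacts [hx, hy, hzv]

end SimpleGraph

namespace Multigraph

open Finset

variable {E T C : Type*} (ends : E → Sym2 T)

/-- A multigraph on `T` is encoded by the map `ends` giving the two ends of each edge, and a
partial edge coloring `c` by the finite set `s` of edges on which it counts. -/
def ProperOn (s : Finset E) (c : E → C) : Prop :=
  ∀ e ∈ s, ∀ f ∈ s, e ≠ f → ∀ t ∈ ends e, t ∈ ends f → c e ≠ c f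

def Misses (s : Finset E) (c : E → C) (t : T) (γ : C) : Prop :=
  ∀ g ∈ s, t ∈ ends g → c g ≠ γ

def kempeGraph (s : Finset E) (c : E → C) (α β : C) : SimpleGraph T :=
  SimpleGraph.fromRel fun x y => ∃ g ∈ s, (c g = α ∨ c g = β) ∧ ends g = s(x, y)

open Classical in
noncomputable def kempeSwap (s : Finset E) (c : E → C) (α β : C) (x : T) (g : E) : C :=
  if (c g = α ∨ c g = β) ∧ ∃ t ∈ ends g, (kempeGraph ends s c α β).Reachable x t then
    Equiv.swap α β (c g)
  else c g

variable {ends} {s : Finset E} {c : E → C}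

lemma ProperOn.mono {s' : Finset E} (hc : ProperOn ends s c) (h : s' ⊆ s) :
    ProperOn ends s' c :=
  fun e he f hf => hc e (h he) f (h hf)

lemma Misses.mono {s' : Finset E} {t : T} {γ : C} (hc : Misses ends s c t γ) (h : s' ⊆ s) :
    Misses ends s' c t γ :=
  fun g hg => hc g (h hg)

lemma Misses.congr {c' : E → C} {t : T} {γ : C} (h : Misses ends s c t γ)
    (hc' : ∀ f ∈ s, t ∈ ends f → c' f = c f) : Misses ends s c' t γ :=
  fun f hf htf => hc' f hf htf ▸ h f hf htf

lemma ProperOn.update_of_notMem [DecidableEq E] (hc : ProperOn ends s c) {e : E} (he : e ∉ s)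
    {α : C} (hα : ∀ t ∈ ends e, Misses ends s c t α) :
    ProperOn ends (insert e s) (Function.update c e α) := by
  have hupd : ∀ g ∈ s, Function.update c e α g = c g := fun g hg =>
    Function.update_of_ne (ne_of_mem_of_not_mem hg he) _ _
  intro f hf g hg hfg t htf htg
  rcases mem_insert.mp hf with rfl | hf' <;> rcases mem_insert.mp hg with rfl | hg'
  · exact absurd rfl hfg
  · rw [Function.update_self, hupd g hg']
    exact (hα t htf g hg' htg).symm
  · rw [Function.update_self, hupd f hf']
    exact hα t htg f hf' htf
  · rw [hupd f hf', hupd g hg']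
    exact hc f hf' g hg' hfg t htf htg

lemma ProperOn.update_of_mem [DecidableEq E] (hc : ProperOn ends s c) {g : E} (hg : g ∈ s)
    {α : C} (hα : ∀ t ∈ ends g, Misses ends s c t α) :
    ProperOn ends s (Function.update c g α) := by
  have := (hc.mono (erase_subset g s)).update_of_notMem (notMem_erase g s)
    fun t ht => (hα t ht).mono (erase_subset g s)
  rwa [insert_erase hg] at this

lemma ProperOn.eq_of_ends_eq (hc : ProperOn ends s c) {g₁ g₂ : E} (hg₁ : g₁ ∈ s) (hg₂ : g₂ ∈ s)
    {x y₁ y₂ : T} (h₁ : ends g₁ = s(x, y₁)) (h₂ : ends g₂ = s(x, y₂)) (hcol : c g₁ = c g₂) :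
    y₁ = y₂ := by
  by_cases hg : g₁ = g₂
  · subst hg
    exact Sym2.congr_right.mp (h₁.symm.trans h₂)
  · exact absurd hcol (hc g₁ hg₁ g₂ hg₂ hg x (h₁ ▸ Sym2.mem_mk_left x y₁)
      (h₂ ▸ Sym2.mem_mk_left x y₂))

section Kempe

variable {α β : C}

lemma exists_of_kempeGraph_adj {x y : T} (h : (kempeGraph ends s c α β).Adj x y) :
    ∃ g ∈ s, (c g = α ∨ c g = β) ∧ ends g = s(x, y) := by
  obtain ⟨-, ⟨g, hg, hcol, hends⟩ | ⟨g, hg, hcol, hends⟩⟩ := (SimpleGraph.fromRel_adj _ x y).mp h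
  exacts [⟨g, hg, hcol, hends⟩, ⟨g, hg, hcol, hends.trans Sym2.eq_swap⟩]

lemma kempeGraph_adj_of_mem {g : E} (hg : g ∈ s) (hcol : c g = α ∨ c g = β) {x y : T}
    (hx : x ∈ ends g) (hy : y ∈ ends g) (hxy : x ≠ y) : (kempeGraph ends s c α β).Adj x y :=
  (SimpleGraph.fromRel_adj _ x y).mpr
    ⟨hxy, Or.inl ⟨g, hg, hcol, Sym2.eq_of_ne_mem hxy hx hy (Sym2.mem_mk_left x y)
      (Sym2.mem_mk_right x y)⟩⟩

lemma ProperOn.kempeGraph_adj_three (hc : ProperOn ends s c) {t y₁ y₂ y₃ : T}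
    (h₁ : (kempeGraph ends s c α β).Adj t y₁) (h₂ : (kempeGraph ends s c α β).Adj t y₂)
    (h₃ : (kempeGraph ends s c α β).Adj t y₃) : y₁ = y₂ ∨ y₁ = y₃ ∨ y₂ = y₃ := by
  obtain ⟨g₁, hg₁, hc₁, he₁⟩ := exists_of_kempeGraph_adj h₁
  obtain ⟨g₂, hg₂, hc₂, he₂⟩ := exists_of_kempeGraph_adj h₂
  obtain ⟨g₃, hg₃, hc₃, he₃⟩ := exists_of_kempeGraph_adj h₃
  have h₁₂ := hc.eq_of_ends_eq hg₁ hg₂ he₁ he₂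
  have h₁₃ := hc.eq_of_ends_eq hg₁ hg₃ he₁ he₃
  have h₂₃ := hc.eq_of_ends_eq hg₂ hg₃ he₂ he₃
  rcases hc₁ with h₁ | h₁ <;> rcases hc₂ with h₂ | h₂ <;> rcases hc₃ with h₃ | h₃ <;>
    first
    | exact Or.inl (h₁₂ (h₁.trans h₂.symm))
    | exact Or.inr (Or.inl (h₁₃ (h₁.trans h₃.symm)))
    | exact Or.inr (Or.inr (h₂₃ (h₂.trans h₃.symm)))

lemma ProperOn.kempeGraph_neighborSet_subsingleton (hc : ProperOn ends s c) {x : T}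
    (hx : Misses ends s c x α ∨ Misses ends s c x β) :
    ((kempeGraph ends s c α β).neighborSet x).Subsingleton := by
  intro y₁ h₁ y₂ h₂
  obtain ⟨g₁, hg₁, hc₁, he₁⟩ := exists_of_kempeGraph_adj h₁
  obtain ⟨g₂, hg₂, hc₂, he₂⟩ := exists_of_kempeGraph_adj h₂
  have hx₁ : x ∈ ends g₁ := he₁ ▸ Sym2.mem_mk_left x y₁
  have hx₂ : x ∈ ends g₂ := he₂ ▸ Sym2.mem_mk_left x y₂
  refine hc.eq_of_ends_eq hg₁ hg₂ he₁ he₂ ?_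
  rcases hx with hx | hx
  · rw [hc₁.resolve_left (hx g₁ hg₁ hx₁), hc₂.resolve_left (hx g₂ hg₂ hx₂)]
  · rw [hc₁.resolve_right (hx g₁ hg₁ hx₁), hc₂.resolve_right (hx g₂ hg₂ hx₂)]

open Classical in
lemma kempeSwap_apply {g : E} (hg : g ∈ s) {x t : T} (ht : t ∈ ends g) :
    kempeSwap ends s c α β x g = if (c g = α ∨ c g = β) ∧ (kempeGraph ends s c α β).Reachable x t
      then Equiv.swap α β (c g) else c g := by
  refine if_congr ⟨fun ⟨hcol, t', ht', hr⟩ => ⟨hcol, ?_⟩, fun ⟨hcol, hr⟩ => ⟨hcol, t, ht, hr⟩⟩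
    rfl rfl
  by_cases htt : t' = t
  · exact htt ▸ hr
  · exact hr.trans (kempeGraph_adj_of_mem hg hcol ht' ht htt).reachable

lemma properOn_kempeSwap (hc : ProperOn ends s c) (α β : C) (x : T) :
    ProperOn ends s (kempeSwap ends s c α β x) := by
  classical
  have hswap : ∀ γ, (γ = α ∨ γ = β) → (Equiv.swap α β γ = α ∨ Equiv.swap α β γ = β) := by
    rintro γ (rfl | rfl) <;> simp
  intro f hf g hg hfg t htf htg
  have hfg' := hc f hf g hg hfg t htf htg
  rw [kempeSwap_apply hf htf, kempeSwap_apply hg htg]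
  split_ifs with h₁ h₂ h₂
  · exact (Equiv.injective _).ne hfg'
  · exact fun h => h₂ ⟨h ▸ hswap _ h₁.1, h₁.2⟩
  · exact fun h => h₁ ⟨h ▸ hswap _ h₂.1, h₂.2⟩
  · exact hfg'

lemma kempeSwap_eq_of_not_reachable {x y : T} (hy : ¬ (kempeGraph ends s c α β).Reachable x y)
    {g : E} (hg : g ∈ s) (hyg : y ∈ ends g) : kempeSwap ends s c α β x g = c g := by
  classical
  rw [kempeSwap_apply hg hyg, if_neg fun h => hy h.2]

lemma Misses.kempeSwap {x : T} (hx : Misses ends s c x β) :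
    Misses ends s (kempeSwap ends s c α β x) x α := by
  classical
  intro g hg hxg
  rw [kempeSwap_apply hg hxg]
  split_ifs with h
  · rcases h.1 with h' | h'
    · rw [h', Equiv.swap_apply_left]
      exact fun hαβ => hx g hg hxg (h'.trans hαβ.symm)
    · exact absurd h' (hx g hg hxg)
  · exact fun h' => h ⟨Or.inl h', SimpleGraph.Reachable.refl x⟩

end Kempe

lemma ProperOn.exists_insert_of_recolor [DecidableEq E] (hc : ProperOn ends s c) {e : E}
    (he : e ∉ s) {u v : T} (huv : ends e = s(u, v)) {g : E} (hg : g ∈ s) (hug : u ∈ ends g)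
    (hv : Misses ends s c v (c g)) {γ : C} (hγ : ∀ t ∈ ends g, Misses ends s c t γ) :
    ∃ c' : E → C, ProperOn ends (insert e s) c' := by
  refine ⟨Function.update (Function.update c g γ) e (c g),
    (hc.update_of_mem hg hγ).update_of_notMem he ?_⟩
  rw [huv]
  intro t ht f hf htf
  by_cases hfg : f = g
  · subst hfg
    rw [Function.update_self]
    exact (hγ u hug f hf hug).symm
  · rw [Function.update_of_ne hfg]
    rcases Sym2.mem_iff.mp ht with rfl | rfl
    · exact hc f hf g hg hfg t htf hug
    · exact hv f hf htf

/-- `u` misses `α` while `v` and `w` miss `δ`, so `u, v, w` are ends of `α`/`δ` Kempe chains and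
one of the chains at `v` and at `w` avoids `u`; swapping it frees a color for `e`, or for `g`. -/
lemma ProperOn.exists_insert_of_kempe [DecidableEq E] (hc : ProperOn ends s c) {e : E}
    (he : e ∉ s) {u v w : T} (huv : ends e = s(u, v)) (hne : u ≠ v) {g : E} (hg : g ∈ s)
    (huw : ends g = s(u, w)) (hwu : w ≠ u) (hv : Misses ends s c v (c g)) {α δ : C}
    (hu : Misses ends s c u α) (hvδ : Misses ends s c v δ) (hwδ : Misses ends s c w δ) :
    ∃ c' : E → C, ProperOn ends (insert e s) c' := by
  have hug : u ∈ ends g := huw ▸ Sym2.mem_mk_left u w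
  have hwv : w ≠ v := fun h => hv g hg (h ▸ huw ▸ Sym2.mem_mk_right u w) rfl
  by_cases hruv : (kempeGraph ends s c α δ).Reachable u v
  · have hruw := SimpleGraph.not_reachable_of_subsingleton_neighborSet
      (fun _ _ _ _ => hc.kempeGraph_adj_three) hne hwu.symm hwv.symm
      (hc.kempeGraph_neighborSet_subsingleton (Or.inl hu))
      (hc.kempeGraph_neighborSet_subsingleton (Or.inr hvδ))
      (hc.kempeGraph_neighborSet_subsingleton (Or.inr hwδ)) hruv
    have hu' : ∀ f ∈ s, u ∈ ends f → kempeSwap ends s c α δ w f = c f :=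
      fun f => kempeSwap_eq_of_not_reachable fun h => hruw h.symm
    have hv' : ∀ f ∈ s, v ∈ ends f → kempeSwap ends s c α δ w f = c f :=
      fun f => kempeSwap_eq_of_not_reachable fun h => hruw (hruv.trans h.symm)
    refine (properOn_kempeSwap hc α δ w).exists_insert_of_recolor he huv hg hug ?_ (γ := α) ?_
    · rw [hu' g hg hug]
      exact hv.congr hv'
    · rw [huw, Sym2.forall_mem_pair]
      exact ⟨hu.congr hu', hwδ.kempeSwap⟩
  · refine ⟨_, (properOn_kempeSwap hc α δ v).update_of_notMem he (α := α) ?_⟩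
    rw [huv, Sym2.forall_mem_pair]
    exact ⟨hu.congr fun f => kempeSwap_eq_of_not_reachable (g := f) fun h => hruv h.symm,
      hvδ.kempeSwap⟩

variable [DecidableEq T]

lemma misses_iff [DecidableEq C] {t : T} {γ : C} :
    Misses ends s c t γ ↔ γ ∉ {g ∈ s | t ∈ ends g}.image c := by
  simp only [Misses, mem_image, mem_filter, not_exists, not_and, and_imp]

lemma exists_misses_of_card_lt {c : E → Fin 4} {t : T} (h : #{g ∈ s | t ∈ ends g} < 4) :
    ∃ γ, Misses ends s c t γ := by
  obtain ⟨γ, -, hγ⟩ := exists_mem_notMem_of_card_lt_card (s := {g ∈ s | t ∈ ends g}.image c)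
    (t := univ) (card_image_le.trans_lt (by simpa using h))
  exact ⟨γ, misses_iff.mpr hγ⟩

/-- If two vertices of degree at most two miss no common color out of four, then each misses
exactly the two colors seen at the other. -/
lemma exists_of_forall_not_misses {c : E → Fin 4} {u v : T} (hu : #{g ∈ s | u ∈ ends g} ≤ 2)
    (hv : #{g ∈ s | v ∈ ends g} ≤ 2)
    (h : ∀ γ, Misses ends s c u γ → ¬ Misses ends s c v γ) :
    ∃ g ∈ s, u ∈ ends g ∧ Misses ends s c v (c g) ∧
      ∃ δ, Misses ends s c v δ ∧ ∀ γ, γ ≠ c g → γ ≠ δ → Misses ends s c u γ := by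
  set U := {g ∈ s | u ∈ ends g}.image c
  set W := {g ∈ s | v ∈ ends g}.image c
  have hWU : Wᶜ ⊆ U := fun γ hγ => by
    by_contra hγU
    exact h γ (misses_iff.mpr hγU) (misses_iff.mpr (mem_compl.mp hγ))
  have hU : #U ≤ 2 := card_image_le.trans hu
  have hW : 2 ≤ #Wᶜ := by
    rw [card_compl, Fintype.card_fin]
    have : #W ≤ 2 := card_image_le.trans hv
    omega
  obtain ⟨β, δ, -, hβδ⟩ := card_eq_two.mp (le_antisymm ((card_le_card hWU).trans hU) hW)
  have hWU' : Wᶜ = U := eq_of_subset_of_card_le hWU (hU.trans hW)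
  have hβ : β ∈ Wᶜ := hβδ ▸ mem_insert_self β {δ}
  have hδ : δ ∈ Wᶜ := hβδ ▸ mem_insert_of_mem (mem_singleton_self δ)
  obtain ⟨g, hg, rfl⟩ := mem_image.mp (hWU hβ)
  refine ⟨g, (mem_filter.mp hg).1, (mem_filter.mp hg).2, misses_iff.mpr (mem_compl.mp hβ), δ,
    misses_iff.mpr (mem_compl.mp hδ), fun γ hγβ hγδ => misses_iff.mpr fun hγ => ?_⟩
  have hγ' : γ ∈ U := hγ
  rw [← hWU', hβδ, mem_insert, mem_singleton] at hγ'
  tauto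

lemma ProperOn.exists_insert_of_forall_not_misses [DecidableEq E] {c : E → Fin 4}
    (hc : ProperOn ends s c) {e : E} (he : e ∉ s) {u v : T} (huv : ends e = s(u, v))
    (hne : u ≠ v) (hloop : ∀ g ∈ s, ¬ (ends g).IsDiag) (hdeg : ∀ t, #{g ∈ s | t ∈ ends g} ≤ 3)
    (hu : #{g ∈ s | u ∈ ends g} ≤ 2) (hv : #{g ∈ s | v ∈ ends g} ≤ 2)
    (hcommon : ∀ γ, Misses ends s c u γ → ¬ Misses ends s c v γ) :
    ∃ c' : E → Fin 4, ProperOn ends (insert e s) c' := by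
  obtain ⟨g, hg, hug, hvg, δ, hvδ, hu⟩ := exists_of_forall_not_misses hu hv hcommon
  obtain ⟨w, huw⟩ : ∃ w, ends g = s(u, w) := ⟨Sym2.Mem.other hug, (Sym2.other_spec hug).symm⟩
  have hwu : w ≠ u := fun h => hloop g hg (by rw [huw, h]; rfl)
  by_cases hfan : ∃ γ, Misses ends s c u γ ∧ Misses ends s c w γ
  · obtain ⟨γ, hγu, hγw⟩ := hfan
    refine hc.exists_insert_of_recolor he huv hg hug hvg (γ := γ) ?_
    rw [huw, Sym2.forall_mem_pair]
    exact ⟨hγu, hγw⟩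
  push Not at hfan
  obtain ⟨α, hαg, hαδ⟩ : ∃ α : Fin 4, α ≠ c g ∧ α ≠ δ := by
    have : ∀ β δ : Fin 4, ∃ α, α ≠ β ∧ α ≠ δ := by decide
    exact this _ _
  obtain ⟨γ, hγ⟩ := exists_misses_of_card_lt (c := c) ((hdeg w).trans_lt (by norm_num))
  have hγδ : γ = δ := by
    by_contra hγδ
    exact hfan γ (hu γ (hγ g hg (huw ▸ Sym2.mem_mk_right u w)).symm hγδ) hγ
  exact hc.exists_insert_of_kempe he huv hne hg huw hwu hvg (hu α hαg hαδ) hvδ (hγδ ▸ hγ)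

lemma ProperOn.exists_insert [DecidableEq E] {c : E → Fin 4} (hc : ProperOn ends s c) {e : E}
    (he : e ∉ s) (hloop : ∀ g ∈ insert e s, ¬ (ends g).IsDiag)
    (hdeg : ∀ t, #{g ∈ insert e s | t ∈ ends g} ≤ 3) :
    ∃ c' : E → Fin 4, ProperOn ends (insert e s) c' := by
  obtain ⟨⟨u, v⟩, huv⟩ := Quot.exists_rep (ends e)
  replace huv : ends e = s(u, v) := huv.symm
  have hdeg₂ : ∀ t ∈ ends e, #{g ∈ s | t ∈ ends g} ≤ 2 := fun t ht => by
    have := hdeg t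
    rw [filter_insert, if_pos ht, card_insert_of_notMem fun h => he (mem_filter.mp h).1] at this
    omega
  by_cases hcommon : ∃ γ, Misses ends s c u γ ∧ Misses ends s c v γ
  · obtain ⟨γ, hγu, hγv⟩ := hcommon
    refine ⟨_, hc.update_of_notMem he (α := γ) ?_⟩
    rw [huv, Sym2.forall_mem_pair]
    exact ⟨hγu, hγv⟩
  push Not at hcommon
  exact hc.exists_insert_of_forall_not_misses he huv
    (fun h => hloop e (mem_insert_self e s) (by rw [huv, h]; rfl))
    (fun g hg => hloop g (mem_insert_of_mem hg))
    (fun t => (card_le_card (filter_subset_filter _ (subset_insert e s))).trans (hdeg t))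
    (hdeg₂ u (huv ▸ Sym2.mem_mk_left u v)) (hdeg₂ v (huv ▸ Sym2.mem_mk_right u v)) hcommon

/-- Shannon's bound `⌊3Δ/2⌋` on the chromatic index of a loopless multigraph, for `Δ = 3`. -/
theorem exists_properOn_fin_four [DecidableEq E] (s : Finset E)
    (hloop : ∀ g ∈ s, ¬ (ends g).IsDiag) (hdeg : ∀ t, #{g ∈ s | t ∈ ends g} ≤ 3) :
    ∃ c : E → Fin 4, ProperOn ends s c := by
  induction s using Finset.induction_on with
  | empty => exact ⟨0, by simp [ProperOn]⟩
  | insert e s he ih =>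
    obtain ⟨c, hc⟩ := ih (fun g hg => hloop g (mem_insert_of_mem hg)) fun t =>
      (card_le_card (filter_subset_filter _ (subset_insert e s))).trans (hdeg t)
    exact hc.exists_insert he hloop hdeg

end Multigraph

/-- The color of a triangle edge whose ends carry the contraction colors `α, β` and whose opposite
vertex carries `τ`: `τ` itself, except that `3` is kept for the edges between triangles, and then
the least of `0, 1, 2` seen at neither end. -/
def triangleEdgeColor (α β τ : Fin 4) : Fin 4 :=
  if τ ≠ 3 then τ else if α ≠ 0 ∧ β ≠ 0 then 0 else if α ≠ 1 ∧ β ≠ 1 then 1 else 2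

lemma triangleEdgeColor_comm : ∀ α β τ, triangleEdgeColor α β τ = triangleEdgeColor β α τ := by
  decide

lemma triangleEdgeColor_ne_three : ∀ α β τ, triangleEdgeColor α β τ ≠ 3 := by decide

lemma triangleEdgeColor_ne_left : ∀ α β τ, α ≠ τ → triangleEdgeColor α β τ ≠ α := by decide

lemma triangleEdgeColor_ne_swap :
    ∀ α β τ, β ≠ τ → triangleEdgeColor α β τ ≠ triangleEdgeColor α τ β := by
  decide

namespace SimpleGraph

variable {V : Type*} {G : SimpleGraph V}

/-- A triangle factor of a cubic graph, described around each vertex `v`: `tri v` is the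
triangle through `v`, `s₁ v` and `s₂ v` are its other two vertices, and `m v` is the third
neighbour of `v`. -/
structure TriangleFactor (G : SimpleGraph V) where
  tri : V → Set V
  s₁ : V → V
  s₂ : V → V
  m : V → V
  tri_eq : ∀ v, tri v = {v, s₁ v, s₂ v}
  tri_eq_of_mem : ∀ {v w}, w ∈ tri v → tri w = tri v
  s₁_ne_s₂ : ∀ v, s₁ v ≠ s₂ v
  adj_iff : ∀ {v w}, G.Adj v w ↔ w = s₁ v ∨ w = s₂ v ∨ w = m v
  m_notMem_tri : ∀ v, m v ∉ tri v

lemma exists_eq_insert_of_mem_triangle {a b c v : V} (hab : G.Adj a b) (hac : G.Adj a c)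
    (hbc : G.Adj b c) (hv : v ∈ ({a, b, c} : Set V)) :
    ∃ x y, ({a, b, c} : Set V) = {v, x, y} ∧ x ≠ y ∧ G.Adj v x ∧ G.Adj v y := by
  rcases hv with rfl | rfl | rfl
  · exact ⟨b, c, rfl, hbc.ne, hab, hac⟩
  · exact ⟨a, c, Set.insert_comm _ _ _, hac.ne, hab.symm, hbc⟩
  · refine ⟨a, b, ?_, hab.ne, hac.symm, hbc.symm⟩
    rw [Set.pair_comm, Set.insert_comm]

theorem IsCubic.nonempty_triangleFactor (hG : G.IsCubic) {P : Set (Set V)}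
    (hP : Setoid.IsPartition P)
    (htri : ∀ S ∈ P, ∃ a b c : V, S = {a, b, c} ∧ a ≠ b ∧ a ≠ c ∧ b ≠ c ∧
      G.Adj a b ∧ G.Adj a c ∧ G.Adj b c) :
    Nonempty (TriangleFactor G) := by
  choose tri htri_mem htri_uniq using hP.2
  have hsides : ∀ v, ∃ x y, tri v = {v, x, y} ∧ x ≠ y ∧ G.Adj v x ∧ G.Adj v y := fun v => by
    obtain ⟨a, b, c, hS, -, -, -, hab, hac, hbc⟩ := htri _ (htri_mem v).1
    rw [hS]
    exact exists_eq_insert_of_mem_triangle hab hac hbc (hS ▸ (htri_mem v).2)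
  choose s₁ s₂ htri_eq hs hadj₁ hadj₂ using hsides
  choose m hm₁ hm₂ hadj using fun v => hG.exists_third_neighbor (hadj₁ v) (hadj₂ v) (hs v)
  refine ⟨⟨tri, s₁, s₂, m, htri_eq,
    fun {v w} hw => (htri_uniq w (tri v) ⟨(htri_mem v).1, hw⟩).symm, hs, hadj _ _, fun v hv => ?_⟩⟩
  rw [htri_eq] at hv
  rcases hv with h | h | h
  exacts [((hadj v (m v)).mpr (Or.inr (Or.inr rfl))).ne h.symm, hm₁ v h, hm₂ v h]

namespace TriangleFactor

variable (F : TriangleFactor G)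

lemma mem_tri_iff {v x : V} : x ∈ F.tri v ↔ x = v ∨ x = F.s₁ v ∨ x = F.s₂ v := by
  rw [F.tri_eq]
  rfl

lemma self_mem_tri (v : V) : v ∈ F.tri v := F.mem_tri_iff.mpr (Or.inl rfl)

lemma s₁_mem_tri (v : V) : F.s₁ v ∈ F.tri v := F.mem_tri_iff.mpr (Or.inr (Or.inl rfl))

lemma s₂_mem_tri (v : V) : F.s₂ v ∈ F.tri v := F.mem_tri_iff.mpr (Or.inr (Or.inr rfl))

lemma adj_s₁ (v : V) : G.Adj v (F.s₁ v) := F.adj_iff.mpr (Or.inl rfl)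

lemma adj_s₂ (v : V) : G.Adj v (F.s₂ v) := F.adj_iff.mpr (Or.inr (Or.inl rfl))

lemma adj_m (v : V) : G.Adj v (F.m v) := F.adj_iff.mpr (Or.inr (Or.inr rfl))

lemma s₁_ne_m (v : V) : F.s₁ v ≠ F.m v :=
  fun h => F.m_notMem_tri v (h ▸ F.s₁_mem_tri v)

lemma s₂_ne_m (v : V) : F.s₂ v ≠ F.m v :=
  fun h => F.m_notMem_tri v (h ▸ F.s₂_mem_tri v)

lemma mem_tri_of_adj {v w : V} (h : G.Adj v w) (hw : w ≠ F.m v) : w ∈ F.tri v := by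
  rcases F.adj_iff.mp h with rfl | rfl | rfl
  exacts [F.s₁_mem_tri v, F.s₂_mem_tri v, absurd rfl hw]

lemma tri_m_ne (v : V) : F.tri (F.m v) ≠ F.tri v :=
  fun h => F.m_notMem_tri v (h ▸ F.self_mem_tri (F.m v))

@[simp]
lemma m_m (v : V) : F.m (F.m v) = v := by
  by_contra h
  exact F.tri_m_ne v (F.tri_eq_of_mem (F.mem_tri_of_adj (F.adj_m v).symm (Ne.symm h))).symm

lemma mk_m_eq_of_mem {u y : V} (hy : y ∈ s(u, F.m u)) : s(y, F.m y) = s(u, F.m u) := by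
  rcases Sym2.mem_iff.mp hy with rfl | rfl
  · rfl
  · rw [m_m, Sym2.eq_swap]

lemma exists_mem_tri_of_lineGraph_adj {u : V} {e g : G.edgeSet}
    (he : (e : Sym2 V) = s(u, F.m u)) (hg : G.lineGraph.Adj e g) {x : V}
    (hx : x ∈ (g : Sym2 V)) : ∃ y ∈ (e : Sym2 V), x ∈ F.tri y := by
  obtain ⟨hne, y, hye, hyg⟩ := lineGraph_adj_iff_exists.mp hg
  obtain ⟨z, hyz, hg'⟩ := exists_adj_eq_of_mem g hyg
  have hz : z ≠ F.m y := by
    rintro rfl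
    exact hne (Subtype.ext (by rw [hg', F.mk_m_eq_of_mem (he ▸ hye), he]))
  rcases Sym2.mem_iff.mp (hg' ▸ hx) with rfl | rfl
  exacts [⟨x, hye, F.self_mem_tri x⟩, ⟨y, hye, F.mem_tri_of_adj hyz hz⟩]

section Contraction

variable [Fintype V] [DecidableEq V]

def contractedEdges : Finset (Sym2 V) := Finset.univ.image fun v => s(v, F.m v)

lemma mk_mem_contractedEdges (v : V) : s(v, F.m v) ∈ F.contractedEdges :=
  Finset.mem_image_of_mem _ (Finset.mem_univ v)

lemma exists_of_mem_map_tri {p : Sym2 V} (hp : p ∈ F.contractedEdges) {S : Set V}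
    (hS : S ∈ Sym2.map F.tri p) : ∃ w, F.tri w = S ∧ p = s(w, F.m w) := by
  obtain ⟨v, -, rfl⟩ := Finset.mem_image.mp hp
  rcases Sym2.mem_iff.mp hS with rfl | rfl
  exacts [⟨v, rfl, rfl⟩, ⟨F.m v, rfl, (F.mk_m_eq_of_mem (Sym2.mem_mk_right _ _)).symm⟩]

lemma not_isDiag_map_tri {p : Sym2 V} (hp : p ∈ F.contractedEdges) :
    ¬ (Sym2.map F.tri p).IsDiag := by
  obtain ⟨v, -, rfl⟩ := Finset.mem_image.mp hp
  exact fun h => F.tri_m_ne v (Sym2.mk_isDiag_iff.mp h).symm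

lemma card_filter_mem_map_tri_le_three (S : Set V) :
    (F.contractedEdges.filter fun p => S ∈ Sym2.map F.tri p).card ≤ 3 := by
  rcases (F.contractedEdges.filter fun p => S ∈ Sym2.map F.tri p).eq_empty_or_nonempty
    with h | ⟨p₀, hp₀⟩
  · rw [h, Finset.card_empty]
    norm_num
  obtain ⟨v, rfl, -⟩ := F.exists_of_mem_map_tri (Finset.mem_filter.mp hp₀).1
    (Finset.mem_filter.mp hp₀).2
  refine (Finset.card_le_card (t := ({v, F.s₁ v, F.s₂ v} : Finset V).image fun w => s(w, F.m w))
    fun p hp => ?_).trans (Finset.card_image_le.trans Finset.card_le_three)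
  obtain ⟨w, hw, rfl⟩ := F.exists_of_mem_map_tri (Finset.mem_filter.mp hp).1
    (Finset.mem_filter.mp hp).2
  have : w ∈ F.tri v := hw ▸ F.self_mem_tri w
  exact Finset.mem_image_of_mem _ (by simpa [F.mem_tri_iff] using this)

end Contraction

/-- `κ v` is the color of the edge `v (m v)`; such a `κ` is a proper edge coloring of the
multigraph obtained by contracting every triangle to a vertex. -/
structure IsContractionColoring (κ : V → Fin 4) : Prop where
  map_m : ∀ v, κ (F.m v) = κ v
  ne_of_mem_tri : ∀ {v w}, w ∈ F.tri v → w ≠ v → κ w ≠ κ v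

theorem exists_isContractionColoring [Fintype V] : ∃ κ, F.IsContractionColoring κ := by
  classical
  obtain ⟨c, hc⟩ := Multigraph.exists_properOn_fin_four F.contractedEdges
    (fun _ => F.not_isDiag_map_tri) F.card_filter_mem_map_tri_le_three
  refine ⟨fun v => c s(v, F.m v), fun v => by simp only [m_m, Sym2.eq_swap], fun {v w} hw hwv => ?_⟩
  refine hc _ (F.mk_mem_contractedEdges w) _ (F.mk_mem_contractedEdges v) (fun h => ?_) (F.tri v)
    (F.tri_eq_of_mem hw ▸ Sym2.mem_mk_left _ _) (Sym2.mem_mk_left _ _)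
  rcases Sym2.eq_iff.mp h with ⟨h, -⟩ | ⟨rfl, -⟩
  exacts [hwv h, F.m_notMem_tri v hw]

variable {F} {κ : V → Fin 4}

lemma IsContractionColoring.ne_s₁ (hκ : F.IsContractionColoring κ) (v : V) :
    κ (F.s₁ v) ≠ κ v :=
  hκ.ne_of_mem_tri (F.s₁_mem_tri v) (F.adj_s₁ v).ne.symm

lemma IsContractionColoring.ne_s₂ (hκ : F.IsContractionColoring κ) (v : V) :
    κ (F.s₂ v) ≠ κ v :=
  hκ.ne_of_mem_tri (F.s₂_mem_tri v) (F.adj_s₂ v).ne.symm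

lemma IsContractionColoring.s₁_ne_s₂ (hκ : F.IsContractionColoring κ) (v : V) :
    κ (F.s₁ v) ≠ κ (F.s₂ v) :=
  hκ.ne_of_mem_tri (F.tri_eq_of_mem (F.s₂_mem_tri v) ▸ F.s₁_mem_tri v) (F.s₁_ne_s₂ v)

lemma IsContractionColoring.eq_of_mem_tri (hκ : F.IsContractionColoring κ) {v w : V}
    (hw : w ∈ F.tri v) (h : κ w = κ v) : w = v := by
  by_contra hwv
  exact hκ.ne_of_mem_tri hw hwv h

lemma IsContractionColoring.apply_eq_of_mem (hκ : F.IsContractionColoring κ) {u y : V}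
    (hy : y ∈ s(u, F.m u)) : κ y = κ u := by
  rcases Sym2.mem_iff.mp hy with rfl | rfl
  exacts [rfl, hκ.map_m u]

lemma IsContractionColoring.notMem_tri (hκ : F.IsContractionColoring κ) {u u' x y : V}
    (hu : κ u = 3) (hu' : κ u' = 3) (hne : s(u, F.m u) ≠ s(u', F.m u')) (hy : y ∈ s(u, F.m u))
    (hx : x ∈ s(u', F.m u')) : x ∉ F.tri y := by
  intro hxy
  obtain rfl := hκ.eq_of_mem_tri hxy (by
    rw [hκ.apply_eq_of_mem hx, hκ.apply_eq_of_mem hy, hu, hu'])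
  exact hne (by rw [← F.mk_m_eq_of_mem hy, F.mk_m_eq_of_mem hx])

variable (F) [DecidableEq V]

def third (v w : V) : V := if w = F.s₁ v then F.s₂ v else F.s₁ v

lemma third_mem_tri (v w : V) : F.third v w ∈ F.tri v := by
  unfold third
  split_ifs
  exacts [F.s₂_mem_tri v, F.s₁_mem_tri v]

lemma third_ne_self (v w : V) : F.third v w ≠ v := by
  unfold third
  split_ifs
  exacts [(F.adj_s₂ v).ne.symm, (F.adj_s₁ v).ne.symm]

lemma third_ne (v w : V) : F.third v w ≠ w := by
  unfold third
  split_ifs with h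
  exacts [h ▸ (F.s₁_ne_s₂ v).symm, Ne.symm h]

lemma third_comm {v w : V} (hw : w = F.s₁ v ∨ w = F.s₂ v) : F.third w v = F.third v w := by
  have hwv : F.tri w = F.tri v :=
    F.tri_eq_of_mem (by rcases hw with rfl | rfl <;> simp [mem_tri_iff])
  have h₁ := F.mem_tri_iff.mp (hwv ▸ F.third_mem_tri w v)
  have h₂ := F.mem_tri_iff.mp (F.third_mem_tri v w)
  have := F.third_ne_self w v
  have := F.third_ne w v
  have := F.third_ne_self v w
  have := F.third_ne v w
  have := F.s₁_ne_s₂ v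
  rcases hw with rfl | rfl <;> rcases h₁ with h₁ | h₁ | h₁ <;> rcases h₂ with h₂ | h₂ | h₂ <;>
    simp_all

def pairColor (κ : V → Fin 4) (v w : V) : Fin 4 :=
  if w = F.m v then κ v else triangleEdgeColor (κ v) (κ w) (κ (F.third v w))

lemma pairColor_comm (hκ : F.IsContractionColoring κ) {v w : V} (h : G.Adj v w) :
    F.pairColor κ v w = F.pairColor κ w v := by
  unfold pairColor
  by_cases hw : w = F.m v
  · subst hw
    rw [if_pos rfl, if_pos (F.m_m v).symm, hκ.map_m]
  · have hv : v ≠ F.m w := fun h => hw (by rw [h, m_m])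
    have hw' : w = F.s₁ v ∨ w = F.s₂ v := (F.adj_iff.mp h).imp_right (Or.resolve_right · hw)
    rw [if_neg hw, if_neg hv, F.third_comm hw', triangleEdgeColor_comm]

lemma pairColor_m (v : V) : F.pairColor κ v (F.m v) = κ v := if_pos rfl

lemma pairColor_s₁ (v : V) :
    F.pairColor κ v (F.s₁ v) = triangleEdgeColor (κ v) (κ (F.s₁ v)) (κ (F.s₂ v)) := by
  rw [pairColor, if_neg (F.s₁_ne_m v), third, if_pos rfl]

lemma pairColor_s₂ (v : V) :
    F.pairColor κ v (F.s₂ v) = triangleEdgeColor (κ v) (κ (F.s₂ v)) (κ (F.s₁ v)) := by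
  rw [pairColor, if_neg (F.s₂_ne_m v), third, if_neg (F.s₁_ne_s₂ v).symm]

lemma pairColor_injective (hκ : F.IsContractionColoring κ) {v w w' : V} (hw : G.Adj v w)
    (hw' : G.Adj v w') (h : F.pairColor κ v w = F.pairColor κ v w') : w = w' := by
  have h₁₂ := triangleEdgeColor_ne_swap (κ v) _ _ (hκ.s₁_ne_s₂ v)
  have h₁ := triangleEdgeColor_ne_left (κ v) (κ (F.s₁ v)) _ (hκ.ne_s₂ v).symm
  have h₂ := triangleEdgeColor_ne_left (κ v) (κ (F.s₂ v)) _ (hκ.ne_s₁ v).symm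
  rcases F.adj_iff.mp hw with rfl | rfl | rfl <;> rcases F.adj_iff.mp hw' with rfl | rfl | rfl <;>
    simp only [pairColor_m, pairColor_s₁, pairColor_s₂] at h <;>
    first
    | rfl
    | exact absurd h h₁₂ | exact absurd h.symm h₁₂
    | exact absurd h h₁ | exact absurd h.symm h₁
    | exact absurd h h₂ | exact absurd h.symm h₂

lemma pairColor_ne_three {v w : V} (hw : w ≠ F.m v) : F.pairColor κ v w ≠ 3 := by
  rw [pairColor, if_neg hw]
  exact triangleEdgeColor_ne_three _ _ _

noncomputable def edgeColor (κ : V → Fin 4) (e : G.edgeSet) : Fin 4 :=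
  F.pairColor κ (e : Sym2 V).out.1 (e : Sym2 V).out.2

lemma edgeColor_eq (hκ : F.IsContractionColoring κ) {e : G.edgeSet} {v w : V}
    (he : (e : Sym2 V) = s(v, w)) : F.edgeColor κ e = F.pairColor κ v w := by
  have hout : s((e : Sym2 V).out.1, (e : Sym2 V).out.2) = s(v, w) := (Quot.out_eq _).trans he
  have hadj : G.Adj v w := by
    rw [← mem_edgeSet, ← he]
    exact e.2
  rcases Sym2.eq_iff.mp hout with ⟨h₁, h₂⟩ | ⟨h₁, h₂⟩
  · rw [edgeColor, h₁, h₂]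
  · rw [edgeColor, h₁, h₂, F.pairColor_comm hκ hadj.symm]

lemma edgeColor_ne_of_adj (hκ : F.IsContractionColoring κ) {e f : G.edgeSet}
    (h : G.lineGraph.Adj e f) : F.edgeColor κ e ≠ F.edgeColor κ f := by
  obtain ⟨hne, v, hve, hvf⟩ := lineGraph_adj_iff_exists.mp h
  obtain ⟨w, hw, he⟩ := exists_adj_eq_of_mem e hve
  obtain ⟨w', hw', hf⟩ := exists_adj_eq_of_mem f hvf
  rw [F.edgeColor_eq hκ he, F.edgeColor_eq hκ hf]
  intro hcol
  exact hne (Subtype.ext (by rw [he, hf, F.pairColor_injective hκ hw hw' hcol]))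

lemma exists_of_edgeColor_eq_three (hκ : F.IsContractionColoring κ) {e : G.edgeSet}
    (h : F.edgeColor κ e = 3) : ∃ u, κ u = 3 ∧ (e : Sym2 V) = s(u, F.m u) := by
  obtain ⟨w, -, he⟩ := exists_adj_eq_of_mem e (Sym2.out_fst_mem (e : Sym2 V))
  rw [F.edgeColor_eq hκ he] at h
  by_cases hw : w = F.m (e : Sym2 V).out.1
  · subst hw
    exact ⟨_, by rwa [pairColor, if_pos rfl] at h, he⟩
  · exact absurd h (F.pairColor_ne_three hw)

/-- Every edge at distance at most two from `e` meets the two triangles `A` at the ends of `e`,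
while no edge meeting `A` is adjacent to another edge of color `3`. -/
lemma three_lt_length_of_edgeColor_eq_three (hκ : F.IsContractionColoring κ) {u u' : V}
    (hu : κ u = 3) (hu' : κ u' = 3) {e f : G.edgeSet} (he : (e : Sym2 V) = s(u, F.m u))
    (hf : (f : Sym2 V) = s(u', F.m u')) (hne : e ≠ f) (p : G.lineGraph.Walk e f) :
    3 < p.length := by
  have hef : s(u, F.m u) ≠ s(u', F.m u') := fun h => hne (Subtype.ext (by rw [he, hf, h]))
  set A := F.tri u ∪ F.tri (F.m u)
  have hA : ∀ y ∈ (e : Sym2 V), F.tri y ⊆ A := by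
    rw [he, Sym2.forall_mem_pair]
    exact ⟨Set.subset_union_left, Set.subset_union_right⟩
  have hA' : ∀ x ∈ A, F.tri x ⊆ A := by
    rintro x (hx | hx) <;> rw [F.tri_eq_of_mem hx]
    exacts [Set.subset_union_left, Set.subset_union_right]
  have hfA : ∀ x ∈ (f : Sym2 V), x ∉ A := by
    rintro x hxf (hxA | hxA)
    · exact hκ.notMem_tri hu hu' hef (Sym2.mem_mk_left _ _) (hf ▸ hxf) hxA
    · exact hκ.notMem_tri hu hu' hef (Sym2.mem_mk_right _ _) (hf ▸ hxf) hxA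
  refine lineGraph_three_lt_length (A := A) hne
    ⟨u, he ▸ Sym2.mem_mk_left _ _, Or.inl (F.self_mem_tri u)⟩
    (fun g hg x hx => ?_) (fun g ⟨x, hxg, hxA⟩ hgf => ?_) p
  · obtain ⟨y, hye, hxy⟩ := F.exists_mem_tri_of_lineGraph_adj he hg hx
    exact hA y hye hxy
  obtain ⟨hgf', y, hyg, hyf⟩ := lineGraph_adj_iff_exists.mp hgf
  obtain ⟨z, hxz, hg'⟩ := exists_adj_eq_of_mem g hxg
  rcases Sym2.mem_iff.mp (hg' ▸ hyg) with rfl | rfl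
  · exact hfA y hyf hxA
  by_cases hy : y = F.m x
  · subst hy
    refine hgf' (Subtype.ext ?_)
    rw [hg', hf, ← F.mk_m_eq_of_mem (hf ▸ hyf : F.m x ∈ s(u', F.m u')),
      F.mk_m_eq_of_mem (Sym2.mem_mk_right x (F.m x))]
  · exact hfA y hyf (hA' x hxA (F.mem_tri_of_adj hxz hy))

theorem isPackingEdgeColoring_edgeColor (hκ : F.IsContractionColoring κ) :
    G.IsPackingEdgeColoring ![1, 1, 1, 3] (F.edgeColor κ) := by
  intro e f hne hcol p
  by_cases h3 : F.edgeColor κ e = 3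
  · obtain ⟨u, hu, he⟩ := F.exists_of_edgeColor_eq_three hκ h3
    obtain ⟨u', hu', hf⟩ := F.exists_of_edgeColor_eq_three hκ (hcol ▸ h3)
    rw [h3]
    exact F.three_lt_length_of_edgeColor_eq_three hκ hu hu' he hf hne p
  · have hone : ∀ i : Fin 4, i ≠ 3 → ![1, 1, 1, 3] i = 1 := by decide
    rw [hone _ h3]
    match p with
    | .nil => exact absurd rfl hne
    | .cons h .nil => exact absurd hcol (F.edgeColor_ne_of_adj hκ h)
    | .cons _ (.cons _ _) => simp

end TriangleFactor

end SimpleGraph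

theorem triangle_partition_packing_edge_colorable_general {V : Type*} [Fintype V]
    (G : SimpleGraph V) (hcubic : G.IsCubic)
    (hpart : ∃ P : Set (Set V), Setoid.IsPartition P ∧
      ∀ S ∈ P, ∃ a b c : V, S = {a, b, c} ∧ a ≠ b ∧ a ≠ c ∧ b ≠ c ∧
        G.Adj a b ∧ G.Adj a c ∧ G.Adj b c) :
    ∃ col : G.edgeSet → Fin 4, G.IsPackingEdgeColoring ![1, 1, 1, 3] col := by
  classical
  obtain ⟨P, hP, htri⟩ := hpart
  obtain ⟨F⟩ := hcubic.nonempty_triangleFactor hP htri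
  obtain ⟨κ, hκ⟩ := F.exists_isContractionColoring
  exact ⟨F.edgeColor κ, F.isPackingEdgeColoring_edgeColor hκ⟩

/-- If `G` is a 2-edge-connected cubic graph whose vertex set can be partitioned into
vertex-disjoint triangles, then `G` admits a (1,1,1,3)-packing edge-coloring. -/
theorem triangle_partition_packing_edge_colorable {V : Type*} [Fintype V]
    (G : SimpleGraph V) (h2ec : G.TwoEdgeConnected) (hcubic : G.IsCubic)
    (hpart : ∃ P : Set (Set V), Setoid.IsPartition P ∧
      ∀ S ∈ P, ∃ a b c : V, S = {a, b, c} ∧ a ≠ b ∧ a ≠ c ∧ b ≠ c ∧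
        G.Adj a b ∧ G.Adj a c ∧ G.Adj b c) :
    ∃ col : G.edgeSet → Fin 4, G.IsPackingEdgeColoring ![1, 1, 1, 3] col :=
  triangle_partition_packing_edge_colorable_general G hcubic hpart
end

section
/- Let G be a connected claw-free cubic graph with at least one bridge, and let G_i be the induced subgraph of G on a connected component of the graph obtained from G by deleting all bridges of G. Suppose G_i is 2-edge-connected, has maximum degree 3, and has at least 5 vertices. Then every vertex of degree 2 in G_i lies on a triangle of G_i (that is, if v has degree 2 in G_i with neighbors u and w, then uw is an edge of G_i), and consequently the set of degree-2 vertices of G_i is an independent set in G_i. -/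
open SimpleGraph

/-! A degree-2 vertex `v` of `Gᵢ` has its third `G`-neighbour `x` outside the component, so `vx`
is a bridge of `G`. A bridge lies on no triangle, hence claw-freeness at `v` makes the two
`Gᵢ`-neighbours of `v` adjacent. If two adjacent vertices `v`, `w` both had degree 2, with common
neighbour `u`, then, `u` having degree at most 3, at most one edge would leave the triangle
`{u, v, w}`: that edge would be a bridge of `Gᵢ`, and without it the triangle would be all of
`Gᵢ`, which has at least 5 vertices. -/

lemma Set.eq_pair_of_ncard_eq_two {α : Type*} {s : Set α} {a b : α} (h : s.ncard = 2)
    (ha : a ∈ s) (hb : b ∈ s) (hab : a ≠ b) : s = {a, b} :=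
  (Set.eq_of_subset_of_ncard_le (Set.pair_subset ha hb) (by rw [h, Set.ncard_pair hab])
    (Set.finite_of_ncard_ne_zero (h.trans_ne two_ne_zero))).symm

namespace SimpleGraph

variable {V : Type*} {G : SimpleGraph V} {u v w x : V}

lemma IsBridge.not_adj_of_adj (hb : G.IsBridge s(v, x)) (hvu : G.Adj v u) (hux : u ≠ x) :
    ¬ G.Adj u x := by
  intro hux'
  refine isBridge_iff.1 hb (Reachable.trans (v := u) (Adj.reachable ?_) (Adj.reachable ?_))
  · simp [hvu, hux, hvu.ne']
  · simp [hux', hvu.ne', hux]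

lemma ClawFree.adj_of_isBridge (hG : G.ClawFree) (hvx : G.Adj v x) (hb : G.IsBridge s(v, x))
    (hvu : G.Adj v u) (hvw : G.Adj v w) (huw : u ≠ w) (hux : u ≠ x) (hwx : w ≠ x) :
    G.Adj u w := by
  by_contra h
  exact hG ⟨v, u, w, x, hvu, hvw, hvx, huw, hux, hwx, h, hb.not_adj_of_adj hvu hux,
    hb.not_adj_of_adj hvw hwx⟩

lemma isBridge_of_mem_supp_of_notMem_supp
    {K : (G.deleteEdges {e | G.IsBridge e}).ConnectedComponent}
    (hv : v ∈ K.supp) (hvx : G.Adj v x) (hx : x ∉ K.supp) : G.IsBridge s(v, x) := by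
  by_contra hb
  exact hx (K.mem_supp_of_adj_mem_supp hv (deleteEdges_adj.2 ⟨hvx, hb⟩))

lemma exists_adj_notMem_of_ncard_neighborSet_induce_lt {s : Set V} {v : s}
    (h : ((G.induce s).neighborSet v).ncard < (G.neighborSet v).ncard) :
    ∃ x, G.Adj v x ∧ x ∉ s := by
  by_contra! hs
  exact h.ne (Set.ncard_preimage_of_injective_subset_range Subtype.val_injective
    fun x hx ↦ ⟨⟨x, hs x hx⟩, rfl⟩)

lemma subsingleton_neighborSet_sdiff_pair (h : (G.neighborSet v).ncard = 3) (hvu : G.Adj v u)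
    (hvw : G.Adj v w) (huw : u ≠ w) : (G.neighborSet v \ {u, w}).Subsingleton := by
  have hfin := Set.finite_of_ncard_ne_zero (h.trans_ne three_ne_zero)
  have : Finite ↑(G.neighborSet v \ {u, w}) := hfin.sdiff.to_subtype
  rw [← Set.ncard_le_one_iff_subsingleton,
    Set.ncard_sdiff (t := G.neighborSet v) (Set.pair_subset hvu hvw), h, Set.ncard_pair huw]

lemma isBridge_of_forall_adj_leaving_eq {s : Set V} (hv : v ∈ s) (hx : x ∉ s)
    (h : ∀ a b, a ∈ s → b ∉ s → G.Adj a b → a = v ∧ b = x) : G.IsBridge s(v, x) := by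
  rintro ⟨p⟩
  obtain ⟨d, -, hd, hd'⟩ := p.exists_boundary_dart s hv hx
  have hadj := deleteEdges_adj.1 d.adj
  obtain ⟨h1, h2⟩ := h _ _ hd hd' hadj.1
  exact hadj.2 (by rw [h1, h2]; rfl)

lemma Connected.eq_univ_of_forall_adj_leaving_eq (hG : G.Connected)
    (hbr : ∀ e, ¬ G.IsBridge e) {s : Set V} (hv : v ∈ s)
    (h : ∀ a b a' b', a ∈ s → b ∉ s → G.Adj a b → a' ∈ s → b' ∉ s →
      G.Adj a' b' → a = a' ∧ b = b') : s = Set.univ := by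
  by_contra hs
  obtain ⟨y, hy⟩ := (Set.ne_univ_iff_exists_notMem s).1 hs
  obtain ⟨d, -, hd, hd'⟩ := (hG.preconnected v y).some.exists_boundary_dart s hv hy
  exact hbr _ (isBridge_of_forall_adj_leaving_eq hd hd' fun a b ha hb hab ↦
    h a b _ _ ha hb hab hd hd' d.adj)

lemma Connected.card_le_three_of_neighborSet_eq_pair (hG : G.Connected)
    (hbr : ∀ e, ¬ G.IsBridge e) (hv : G.neighborSet v = {u, w}) (hw : G.neighborSet w = {u, v})
    (hu : (G.neighborSet u \ {v, w}).Subsingleton) : Nat.card V ≤ 3 := by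
  have hleave : ∀ a b, a ∈ ({u, v, w} : Set V) → b ∉ ({u, v, w} : Set V) → G.Adj a b →
      a = u ∧ b ∈ G.neighborSet u \ {v, w} := by
    rintro a b (rfl | rfl | rfl) hb hab
    · exact ⟨rfl, hab, by simp_all⟩
    · rw [← mem_neighborSet, hv] at hab
      simp_all
    · rw [← mem_neighborSet, hw] at hab
      simp_all
  have huniv := hG.eq_univ_of_forall_adj_leaving_eq hbr (Set.mem_insert u {v, w})
    fun a b a' b' ha hb hab ha' hb' hab' ↦ by
      obtain ⟨rfl, hb⟩ := hleave a b ha hb hab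
      obtain ⟨rfl, hb'⟩ := hleave a' b' ha' hb' hab'
      exact ⟨rfl, hu hb hb'⟩
  rw [← Set.ncard_univ, ← huniv]
  exact (Set.ncard_insert_le _ _).trans (Nat.succ_le_succ ((Set.ncard_insert_le _ _).trans
    (by rw [Set.ncard_singleton])))

lemma ClawFree.induce_supp_adj_of_ncard_neighborSet_lt (hG : G.ClawFree)
    {K : (G.deleteEdges {e | G.IsBridge e}).ConnectedComponent} {v u w : K.supp}
    (hv : ((G.induce K.supp).neighborSet v).ncard < (G.neighborSet v).ncard)
    (hvu : (G.induce K.supp).Adj v u) (hvw : (G.induce K.supp).Adj v w) (huw : u ≠ w) :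
    (G.induce K.supp).Adj u w := by
  obtain ⟨x, hvx, hx⟩ := exists_adj_notMem_of_ncard_neighborSet_induce_lt hv
  exact hG.adj_of_isBridge hvx (isBridge_of_mem_supp_of_notMem_supp v.2 hvx hx) hvu hvw
    (Subtype.val_injective.ne huw) (ne_of_mem_of_not_mem u.2 hx) (ne_of_mem_of_not_mem w.2 hx)

end SimpleGraph

theorem degree_two_vertices_on_triangle_general {V : Type*}
    (G : SimpleGraph V) (hclaw : G.ClawFree) (hcubic : G.IsCubic)
    (K : (G.deleteEdges {e | G.IsBridge e}).ConnectedComponent)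
    (h2ec : (G.induce K.supp).TwoEdgeConnected)
    (hcard : 5 ≤ Nat.card K.supp) :
    (∀ v u w : K.supp, ((G.induce K.supp).neighborSet v).ncard = 2 →
      (G.induce K.supp).Adj v u → (G.induce K.supp).Adj v w → u ≠ w →
      (G.induce K.supp).Adj u w) ∧
    (∀ v w : K.supp, ((G.induce K.supp).neighborSet v).ncard = 2 →
      ((G.induce K.supp).neighborSet w).ncard = 2 → ¬ (G.induce K.supp).Adj v w) := by
  have triangle : ∀ v u w : K.supp, ((G.induce K.supp).neighborSet v).ncard = 2 →
      (G.induce K.supp).Adj v u → (G.induce K.supp).Adj v w → u ≠ w →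
      (G.induce K.supp).Adj u w := fun v u w hv ↦
    hclaw.induce_supp_adj_of_ncard_neighborSet_lt (by rw [hv, hcubic v]; norm_num)
  refine ⟨triangle, fun v w hv hw hvw ↦ ?_⟩
  obtain ⟨u, hvu, huw⟩ : ∃ u, (G.induce K.supp).Adj v u ∧ u ≠ w :=
    Set.exists_ne_of_one_lt_ncard (hv ▸ one_lt_two) w
  have huw' := triangle v u w hv hvu hvw huw
  have hNv := Set.eq_pair_of_ncard_eq_two hv hvu hvw huw
  have hNw := Set.eq_pair_of_ncard_eq_two hw huw'.symm hvw.symm hvu.ne'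
  have hNu : ((G.induce K.supp).neighborSet u \ {v, w}).Subsingleton :=
    ((subsingleton_neighborSet_sdiff_pair (hcubic u) hvu.symm huw'
      (Subtype.val_injective.ne hvw.ne)).preimage
      Subtype.val_injective).anti (by intro t; simp [Subtype.ext_iff])
  have := h2ec.1.card_le_three_of_neighborSet_eq_pair h2ec.2.2 hNv hNw hNu
  omega

/-- In a connected claw-free cubic graph with a bridge, let `Gᵢ = G.induce K.supp` be the
induced subgraph on a connected component `K` of the graph obtained by deleting all bridges.
If `Gᵢ` is 2-edge-connected with maximum degree 3 and at least 5 vertices, then every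
degree-2 vertex of `Gᵢ` lies on a triangle of `Gᵢ`, and the degree-2 vertices form an
independent set. -/
theorem degree_two_vertices_on_triangle {V : Type*} [Fintype V]
    (G : SimpleGraph V) (hconn : G.Connected) (hclaw : G.ClawFree) (hcubic : G.IsCubic)
    (hbridge : ∃ e : Sym2 V, G.IsBridge e)
    (K : (G.deleteEdges {e | G.IsBridge e}).ConnectedComponent)
    (h2ec : (G.induce K.supp).TwoEdgeConnected)
    (hmaxdeg : (∀ v, ((G.induce K.supp).neighborSet v).ncard ≤ 3) ∧
      ∃ v, ((G.induce K.supp).neighborSet v).ncard = 3)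
    (hcard : 5 ≤ Nat.card K.supp) :
    (∀ v u w : K.supp, ((G.induce K.supp).neighborSet v).ncard = 2 →
      (G.induce K.supp).Adj v u → (G.induce K.supp).Adj v w → u ≠ w →
      (G.induce K.supp).Adj u w) ∧
    (∀ v w : K.supp, ((G.induce K.supp).neighborSet v).ncard = 2 →
      ((G.induce K.supp).neighborSet w).ncard = 2 → ¬ (G.induce K.supp).Adj v w) :=
  degree_two_vertices_on_triangle_general G hclaw hcubic K h2ec hcard
end

section
/- Let G be a connected claw-free cubic graph with at least one bridge, and let G_i be the induced subgraph of G on a connected component of the graph obtained from G by deleting all bridges of G. Suppose G_i is 2-edge-connected, has maximum degree 3, and has at least 5 vertices. Let v be a vertex of degree 2 in G_i with neighbors u and w (so that uw is an edge of G_i), let s be the neighbor of u in G_i distinct from v and w, and let b be the neighbor of w in G_i distinct from u and v. Then s ≠ b, and both s and b have degree 3 in G_i. -/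
open SimpleGraph

/-!
A vertex of `K` has at most one neighbour outside `K`: two outside neighbours `x, y` together
with a third neighbour `z` form a claw unless two of them are adjacent, and an edge on a
triangle is never a bridge, so such a triangle would pull `x` or `y` into `K`. Hence every
vertex of `G[K]` has degree at least 2, and the two neighbours of a vertex of degree 2 in `G[K]`
are adjacent, again by claw-freeness.

If `s` had degree 2, its second neighbour would be adjacent to `u`, hence equal to `w`; then
`{v, u, w, s}` is closed under adjacency and `G[K]` has only four vertices. If `s = b`, the
third neighbour `t` of `s` lies outside `{v, u, w, s}`, and this set stays closed after
deleting the edge `st`, which is therefore a bridge of `G[K]`.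
-/

namespace Set

variable {α : Type*} [Finite α] {S : Set α} {a b c : α}

theorem eq_pair_of_ncard_le_two (hS : S.ncard ≤ 2) (ha : a ∈ S) (hb : b ∈ S) (hab : a ≠ b) :
    S = {a, b} :=
  (eq_of_subset_of_ncard_le (pair_subset ha hb) (by rwa [ncard_pair hab])).symm

theorem eq_triple_of_ncard_le_three (hS : S.ncard ≤ 3) (ha : a ∈ S) (hb : b ∈ S) (hc : c ∈ S)
    (hab : a ≠ b) (hac : a ≠ c) (hbc : b ≠ c) : S = {a, b, c} :=
  (eq_of_subset_of_ncard_le (insert_subset ha (pair_subset hb hc))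
    (by rwa [ncard_eq_three.mpr ⟨a, b, c, hab, hac, hbc, rfl⟩])).symm

end Set

namespace SimpleGraph

section Reachability

variable {W : Type*} {H : SimpleGraph W}

theorem Reachable.mem_of_neighborSet_subset {A : Set W} (hA : ∀ a ∈ A, H.neighborSet a ⊆ A)
    {x y : W} (h : H.Reachable x y) (hx : x ∈ A) : y ∈ A := by
  obtain ⟨p⟩ := h
  induction p with
  | nil => exact hx
  | cons hadj _ ih => exact ih (hA _ hx hadj)

theorem Reachable.mem_of_neighborSet_subset_diamond {v u w s x y : W}
    (hv : H.neighborSet v ⊆ {u, w}) (hu : H.neighborSet u ⊆ {v, w, s})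
    (hw : H.neighborSet w ⊆ {v, u, s}) (hs : H.neighborSet s ⊆ {u, w})
    (h : H.Reachable x y) (hx : x ∈ ({v, u, w, s} : Set W)) : y ∈ ({v, u, w, s} : Set W) := by
  refine h.mem_of_neighborSet_subset ?_ hx
  rintro a (rfl | rfl | rfl | rfl) c hc
  · rcases hv hc with rfl | rfl <;> simp
  · rcases hu hc with rfl | rfl | rfl <;> simp
  · rcases hw hc with rfl | rfl | rfl <;> simp
  · rcases hs hc with rfl | rfl <;> simp

end Reachability

section MaxDegreeThree

variable {W : Type*} [Finite W] {H : SimpleGraph W} (hmax : ∀ x, (H.neighborSet x).ncard ≤ 3)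
  {v u w s : W} (hv2 : (H.neighborSet v).ncard = 2) (hvu : H.Adj v u) (hvw : H.Adj v w)
  (huw : H.Adj u w) (hus : H.Adj u s) (hsv : s ≠ v)
include hmax hv2 hvu hvw huw hus hsv

theorem Connected.ncard_neighborSet_third_eq_three (hconn : H.Connected)
    (hcard : 5 ≤ Nat.card W) (hmin : ∀ x, 2 ≤ (H.neighborSet x).ncard)
    (htri : ∀ x p q, (H.neighborSet x).ncard = 2 → H.Adj x p → H.Adj x q → p ≠ q → H.Adj p q)
    (hsw : s ≠ w) : (H.neighborSet s).ncard = 3 := by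
  have nbrv := Set.eq_pair_of_ncard_le_two hv2.le hvu hvw huw.ne
  have nbru := Set.eq_triple_of_ncard_le_three (hmax u) hvu.symm huw hus hvw.ne hsv.symm hsw.symm
  by_contra h3
  have hs2 : (H.neighborSet s).ncard = 2 := by
    have := hmin s
    have := hmax s
    omega
  obtain ⟨t, hst, htu⟩ := Set.exists_mem_notMem_of_ncard_lt_ncard
    (s := {u}) (t := H.neighborSet s) (by rw [Set.ncard_singleton, hs2]; norm_num)
  have hut : t ∈ H.neighborSet u := htri s u t hs2 hus.symm hst (Ne.symm htu)
  obtain rfl : t = w := by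
    rw [nbru] at hut
    rcases hut with rfl | rfl | rfl
    · have hsv' : s ∈ H.neighborSet t := hst.symm
      rw [nbrv] at hsv'
      rcases hsv' with rfl | rfl
      exacts [(hus.ne rfl).elim, (hsw rfl).elim]
    · rfl
    · exact (hst.ne rfl).elim
  have nbrs := Set.eq_pair_of_ncard_le_two hs2.le hus.symm hst huw.ne
  have nbrw := Set.eq_triple_of_ncard_le_three (hmax t) hvw.symm huw.symm hst.symm hvu.ne
    hsv.symm hus.ne
  have hall (y : W) : y ∈ ({v, u, t, s} : Set W) :=
    (hconn.preconnected v y).mem_of_neighborSet_subset_diamond nbrv.le nbru.le nbrw.le nbrs.le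
      (by simp)
  have hsurj : Function.Surjective ![v, u, t, s] := fun y => by
    rcases hall y with rfl | rfl | rfl | rfl
    exacts [⟨0, rfl⟩, ⟨1, rfl⟩, ⟨2, rfl⟩, ⟨3, rfl⟩]
  have := Nat.card_le_card_of_surjective _ hsurj
  simp only [Nat.card_eq_fintype_card, Fintype.card_fin] at this
  omega

theorem exists_isBridge_of_adj_of_ncard_neighborSet_eq_three (hws : H.Adj w s)
    (hs3 : (H.neighborSet s).ncard = 3) : ∃ e, H.IsBridge e := by
  have nbrv := Set.eq_pair_of_ncard_le_two hv2.le hvu hvw huw.ne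
  have nbru := Set.eq_triple_of_ncard_le_three (hmax u) hvu.symm huw hus hvw.ne hsv.symm hws.ne
  have nbrw := Set.eq_triple_of_ncard_le_three (hmax w) hvw.symm huw.symm hws hvu.ne hsv.symm
    hus.ne
  obtain ⟨t, hst, htuw⟩ := Set.exists_mem_notMem_of_ncard_lt_ncard
    (s := {u, w}) (t := H.neighborSet s) (by rw [Set.ncard_pair huw.ne, hs3]; norm_num)
  refine ⟨s(s, t), isBridge_iff.mpr fun hreach => ?_⟩
  set H' := H.deleteEdges {s(s, t)}
  have hle (a : W) : H'.neighborSet a ⊆ H.neighborSet a := neighborSet_mono (deleteEdges_le _) a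
  simp only [Set.mem_insert_iff, Set.mem_singleton_iff, not_or] at htuw
  have nbrs := Set.eq_triple_of_ncard_le_three hs3.le hus.symm hws.symm hst huw.ne
    (Ne.symm htuw.1) (Ne.symm htuw.2)
  have nbrs' : H'.neighborSet s ⊆ {u, w} := fun c hc => by
    rcases nbrs ▸ hle s hc with rfl | rfl | rfl
    exacts [.inl rfl, .inr rfl, ((deleteEdges_adj.mp hc).2 rfl).elim]
  have ht := hreach.mem_of_neighborSet_subset_diamond ((hle v).trans nbrv.le)
    ((hle u).trans nbru.le) ((hle w).trans nbrw.le) nbrs' (by simp)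
  rcases ht with rfl | rfl | rfl | rfl
  · have hsv' : s ∈ H.neighborSet t := hst.symm
    rw [nbrv] at hsv'
    rcases hsv' with rfl | rfl
    exacts [hus.ne rfl, hws.ne rfl]
  exacts [htuw.1 rfl, htuw.2 rfl, hst.ne rfl]

end MaxDegreeThree

section ClawFreeCubic

variable {V : Type*} {G : SimpleGraph V}

theorem ClawFree.adj_or_adj_or_adj (hclaw : G.ClawFree) {a x y z : V} (hx : G.Adj a x)
    (hy : G.Adj a y) (hz : G.Adj a z) (hxy : x ≠ y) (hxz : x ≠ z) (hyz : y ≠ z) :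
    G.Adj x y ∨ G.Adj x z ∨ G.Adj y z := by
  by_contra! h
  exact hclaw ⟨a, x, y, z, hx, hy, hz, hxy, hxz, hyz, h.1, h.2.1, h.2.2⟩

theorem IsCubic.finite_neighborSet (hcubic : G.IsCubic) (a : V) : (G.neighborSet a).Finite :=
  Set.finite_of_ncard_ne_zero (by rw [hcubic a]; norm_num)

theorem ncard_neighborSet_induce (A : Set V) (a : A) :
    ((G.induce A).neighborSet a).ncard = (G.neighborSet a ∩ A).ncard := by
  rw [← Set.ncard_image_of_injective _ Subtype.val_injective]
  congr 1
  ext x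
  constructor
  · rintro ⟨b, hb, rfl⟩
    exact ⟨hb, b.2⟩
  · rintro ⟨hx, hxA⟩
    exact ⟨⟨x, hxA⟩, hx, rfl⟩

theorem not_isBridge_of_adj_of_adj {a x y : V} (hay : G.Adj a y) (hxy : G.Adj x y) :
    ¬G.IsBridge s(a, x) := by
  rw [isBridge_iff, not_not]
  have hay' : (G.deleteEdges {s(a, x)}).Adj a y := by
    simp [deleteEdges_adj, hay, hay.ne.symm, hxy.ne.symm]
  have hyx : (G.deleteEdges {s(a, x)}).Adj y x := by
    simp [deleteEdges_adj, hxy.symm, hxy.ne.symm, hay.ne.symm]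
  exact hay'.reachable.trans hyx.reachable

variable {K : (G.deleteEdges {e | G.IsBridge e}).ConnectedComponent}

theorem ConnectedComponent.mem_supp_of_adj_of_adj_of_adj {a x y : V} (ha : a ∈ K.supp)
    (hax : G.Adj a x) (hay : G.Adj a y) (hxy : G.Adj x y) : x ∈ K.supp := by
  have hadj : (G.deleteEdges {e | G.IsBridge e}).Adj a x :=
    deleteEdges_adj.mpr ⟨hax, not_isBridge_of_adj_of_adj hay hxy⟩
  rw [ConnectedComponent.mem_supp_iff] at ha ⊢
  exact ha ▸ ConnectedComponent.sound hadj.symm.reachable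

variable (hclaw : G.ClawFree) (hcubic : G.IsCubic)
include hclaw hcubic

theorem ncard_neighborSet_sdiff_supp_le_one {a : V} (ha : a ∈ K.supp) :
    (G.neighborSet a \ K.supp).ncard ≤ 1 := by
  refine (Set.ncard_le_one (hcubic.finite_neighborSet a).sdiff).mpr ?_
  rintro x ⟨hx, hxK⟩ y ⟨hy, hyK⟩
  by_contra hxy
  obtain ⟨z, hz, hzxy⟩ := Set.exists_mem_notMem_of_ncard_lt_ncard
    (s := {x, y}) (t := G.neighborSet a) (by rw [Set.ncard_pair hxy, hcubic a]; norm_num)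
  simp only [Set.mem_insert_iff, Set.mem_singleton_iff, not_or] at hzxy
  rcases hclaw.adj_or_adj_or_adj hx hy hz hxy (Ne.symm hzxy.1) (Ne.symm hzxy.2)
    with h | h | h
  · exact hxK (ConnectedComponent.mem_supp_of_adj_of_adj_of_adj ha hx hy h)
  · exact hxK (ConnectedComponent.mem_supp_of_adj_of_adj_of_adj ha hx hz h)
  · exact hyK (ConnectedComponent.mem_supp_of_adj_of_adj_of_adj ha hy hz h)

theorem two_le_ncard_neighborSet_induce_supp (a : K.supp) :
    2 ≤ ((G.induce K.supp).neighborSet a).ncard := by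
  have hsplit := Set.ncard_inter_add_ncard_sdiff_eq_ncard (G.neighborSet a) K.supp
    (hcubic.finite_neighborSet a)
  have houtside := ncard_neighborSet_sdiff_supp_le_one hclaw hcubic a.2
  rw [hcubic a] at hsplit
  rw [ncard_neighborSet_induce]
  omega

theorem adj_of_ncard_neighborSet_induce_supp_eq_two {a p q : K.supp}
    (h2 : ((G.induce K.supp).neighborSet a).ncard = 2) (hp : (G.induce K.supp).Adj a p)
    (hq : (G.induce K.supp).Adj a q) (hpq : p ≠ q) : (G.induce K.supp).Adj p q := by
  rw [ncard_neighborSet_induce] at h2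
  obtain ⟨x, hx, hxK⟩ := Set.exists_mem_notMem_of_ncard_lt_ncard
    (s := G.neighborSet a ∩ K.supp) (t := G.neighborSet a) (by rw [h2, hcubic a]; norm_num)
    ((hcubic.finite_neighborSet a).inter_of_left _)
  have hxK : x ∉ K.supp := fun h => hxK ⟨hx, h⟩
  have hpx : (p : V) ≠ x := fun h => hxK (h ▸ p.2)
  have hqx : (q : V) ≠ x := fun h => hxK (h ▸ q.2)
  rcases hclaw.adj_or_adj_or_adj hp hq hx (Subtype.coe_ne_coe.mpr hpq) hpx hqx with h | h | h
  · exact h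
  · exact absurd (ConnectedComponent.mem_supp_of_adj_of_adj_of_adj a.2 hx hp h.symm) hxK
  · exact absurd (ConnectedComponent.mem_supp_of_adj_of_adj_of_adj a.2 hx hq h.symm) hxK

end ClawFreeCubic

end SimpleGraph

theorem third_neighbors_distinct_and_degree_three_general {V : Type*}
    (G : SimpleGraph V) (hclaw : G.ClawFree) (hcubic : G.IsCubic)
    (K : (G.deleteEdges {e | G.IsBridge e}).ConnectedComponent)
    (h2ec : (G.induce K.supp).TwoEdgeConnected)
    (hmaxdeg : (∀ v, ((G.induce K.supp).neighborSet v).ncard ≤ 3) ∧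
      ∃ v, ((G.induce K.supp).neighborSet v).ncard = 3)
    (hcard : 5 ≤ Nat.card K.supp)
    (v u w s b : K.supp)
    (hv2 : ((G.induce K.supp).neighborSet v).ncard = 2)
    (hvu : (G.induce K.supp).Adj v u) (hvw : (G.induce K.supp).Adj v w)
    (huw' : (G.induce K.supp).Adj u w)
    (hus : (G.induce K.supp).Adj u s) (hsv : s ≠ v) (hsw : s ≠ w)
    (hwb : (G.induce K.supp).Adj w b) (hbu : b ≠ u) (hbv : b ≠ v) :
    s ≠ b ∧ ((G.induce K.supp).neighborSet s).ncard = 3 ∧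
      ((G.induce K.supp).neighborSet b).ncard = 3 := by
  have : Finite K.supp := Nat.finite_of_card_ne_zero (by omega)
  obtain ⟨hconnK, -, hnobridge⟩ := h2ec
  have hmin := two_le_ncard_neighborSet_induce_supp hclaw hcubic (K := K)
  have htri (x p q : K.supp) := adj_of_ncard_neighborSet_induce_supp_eq_two hclaw hcubic
    (a := x) (p := p) (q := q)
  have hs3 := hconnK.ncard_neighborSet_third_eq_three hmaxdeg.1 hv2 hvu hvw huw' hus hsv hcard
    hmin htri hsw
  have hb3 := hconnK.ncard_neighborSet_third_eq_three hmaxdeg.1 hv2 hvw hvu huw'.symm hwb hbv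
    hcard hmin htri hbu
  refine ⟨?_, hs3, hb3⟩
  rintro rfl
  obtain ⟨e, he⟩ := exists_isBridge_of_adj_of_ncard_neighborSet_eq_three hmaxdeg.1 hv2 hvu hvw
    huw' hus hsv hwb hs3
  exact hnobridge e he

/-- With `Gᵢ` as in the bridge-component set-up: if `v` has degree 2 in `Gᵢ` with neighbors
`u` and `w`, `s` is the third neighbor of `u` and `b` is the third neighbor of `w`, then
`s ≠ b` and both `s` and `b` have degree 3 in `Gᵢ`. -/
theorem third_neighbors_distinct_and_degree_three {V : Type*} [Fintype V]
    (G : SimpleGraph V) (hconn : G.Connected) (hclaw : G.ClawFree) (hcubic : G.IsCubic)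
    (hbridge : ∃ e : Sym2 V, G.IsBridge e)
    (K : (G.deleteEdges {e | G.IsBridge e}).ConnectedComponent)
    (h2ec : (G.induce K.supp).TwoEdgeConnected)
    (hmaxdeg : (∀ v, ((G.induce K.supp).neighborSet v).ncard ≤ 3) ∧
      ∃ v, ((G.induce K.supp).neighborSet v).ncard = 3)
    (hcard : 5 ≤ Nat.card K.supp)
    (v u w s b : K.supp)
    (hv2 : ((G.induce K.supp).neighborSet v).ncard = 2)
    (hvu : (G.induce K.supp).Adj v u) (hvw : (G.induce K.supp).Adj v w) (huw : u ≠ w)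
    (huw' : (G.induce K.supp).Adj u w)
    (hus : (G.induce K.supp).Adj u s) (hsv : s ≠ v) (hsw : s ≠ w)
    (hwb : (G.induce K.supp).Adj w b) (hbu : b ≠ u) (hbv : b ≠ v) :
    s ≠ b ∧ ((G.induce K.supp).neighborSet s).ncard = 3 ∧
      ((G.induce K.supp).neighborSet b).ncard = 3 :=
  third_neighbors_distinct_and_degree_three_general G hclaw hcubic K h2ec hmaxdeg hcard v u w s b
    hv2 hvu hvw huw' hus hsv hsw hwb hbu hbv
end
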